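/- arXiv:2407.14884 — 7 statements merged into one kernel-verified Lean document; each statement's English description precedes it below -/
import Mathlib

section
/- Let E be a separable Banach space, F a Banach space, (Ω,F,ℙ) a probability space, and 1 ≤ p < ∞. The space Λ_p^ℙ(E,F) of bounded linear operators L : L^p(Ω,E,ℙ) → F with finite p-semivariation norm ⦀L⦀_{p,ℙ} < ∞, equipped with ⦀·⦀_{p,ℙ}, is a Banach space. -/
open MeasureTheory ENNReal Filter

noncomputable section

/-- The `p`-semivariation norm `⦀L⦀_{p,ℙ}` of a linear operator `L : L^p(Ω,E,ℙ) → F`: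
supremum of `∑ ‖L(1_{Aᵢ} xᵢ)‖` over simple functions `∑ 1_{Aᵢ} xᵢ` with `Aᵢ` pairwise
disjoint measurable and `L^p`-norm at most `1`. -/
def opSemiVar {Ω E F : Type*} [MeasurableSpace Ω] (P : Measure Ω) [IsFiniteMeasure P]
    [NormedAddCommGroup E] [NormedSpace ℝ E] [NormedAddCommGroup F] [NormedSpace ℝ F]
    (p : ℝ≥0∞) [Fact (1 ≤ p)] (L : Lp E p P →L[ℝ] F) : ℝ≥0∞ :=
  ⨆ (n : ℕ) (As : Fin n → Set Ω) (xs : Fin n → E) (hAs : ∀ i, MeasurableSet (As i))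
    (_ : Pairwise (Function.onFun Disjoint As))
    (_ : eLpNorm (fun ω => ∑ i, (As i).indicator (fun _ => xs i) ω) p P ≤ 1),
    ∑ i, (‖L (indicatorConstLp p (hAs i) (measure_ne_top P (As i)) (xs i))‖₊ : ℝ≥0∞)

/-! A linear operator is controlled in operator norm by its semivariation: for `p < ∞` simple
functions are dense in `L^p`, and a simple function of norm at most one is a disjoint sum of
`1_{Aᵢ} xᵢ`, on which `‖L ·‖` is bounded by the semivariation through the triangle inequality.
Hence the semivariation is a norm and a semivariation-Cauchy sequence converges in operator norm.
Being a supremum of functions continuous for the operator norm, the semivariation is lower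
semicontinuous, which carries the Cauchy bounds over to the limit. -/

open Topology

theorem MeasureTheory.SimpleFunc.sum_range_indicator_preimage_singleton {α β : Type*}
    [MeasurableSpace α] [AddCommMonoid β] (f : SimpleFunc α β) (a : α) :
    ∑ y ∈ f.range, (f ⁻¹' {y}).indicator (fun _ => y) a = f a := by
  rw [Finset.sum_eq_single_of_mem (f a) (f.mem_range_self a)]
  · exact Set.indicator_of_mem (Set.mem_preimage.2 rfl) _
  · exact fun y _ hy => Set.indicator_of_notMem (fun h => hy h.symm) _

section
variable {Ω E F : Type*} [MeasurableSpace Ω] {P : Measure Ω} [IsFiniteMeasure P]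
    [NormedAddCommGroup E] [NormedSpace ℝ E] [NormedAddCommGroup F] [NormedSpace ℝ F]
    {p : ℝ≥0∞} [Fact (1 ≤ p)]

theorem sum_enorm_le_opSemiVar {ι : Type*} [Fintype ι] (L : Lp E p P →L[ℝ] F)
    (A : ι → Set Ω) (x : ι → E) (hA : ∀ i, MeasurableSet (A i))
    (hd : Pairwise (Function.onFun Disjoint A))
    (h1 : eLpNorm (fun ω => ∑ i, (A i).indicator (fun _ => x i) ω) p P ≤ 1) :
    ∑ i, ‖L (indicatorConstLp p (hA i) (measure_ne_top P (A i)) (x i))‖ₑ ≤ opSemiVar P p L := by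
  set e := (Fintype.equivFin ι).symm
  have hd' : Pairwise (Function.onFun Disjoint (A ∘ e)) := fun i j hij =>
    hd (e.injective.ne hij)
  have h1' : eLpNorm (fun ω => ∑ i, (A (e i)).indicator (fun _ => x (e i)) ω) p P ≤ 1 := by
    convert h1 using 4 with ω
    exact e.sum_comp fun i => (A i).indicator (fun _ => x i) ω
  rw [← e.sum_comp]
  exact le_iSup_of_le _ <| le_iSup_of_le (A ∘ e) <| le_iSup_of_le (x ∘ e) <|
    le_iSup_of_le (fun i => hA (e i)) <| le_iSup_of_le hd' <| le_iSup_of_le h1' le_rfl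

theorem opSemiVar_add_le (L L' : Lp E p P →L[ℝ] F) :
    opSemiVar P p (L + L') ≤ opSemiVar P p L + opSemiVar P p L' := by
  simp only [opSemiVar, iSup_le_iff]
  intro n A x hA hd h1
  calc ∑ i, (‖(L + L') (indicatorConstLp p (hA i) (measure_ne_top P (A i)) (x i))‖₊ : ℝ≥0∞)
      ≤ ∑ i, (‖L (indicatorConstLp p (hA i) (measure_ne_top P (A i)) (x i))‖ₑ
          + ‖L' (indicatorConstLp p (hA i) (measure_ne_top P (A i)) (x i))‖ₑ) :=
        Finset.sum_le_sum fun i _ => enorm_add_le _ _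
    _ ≤ opSemiVar P p L + opSemiVar P p L' := by
        rw [Finset.sum_add_distrib]
        exact add_le_add (sum_enorm_le_opSemiVar L A x hA hd h1)
          (sum_enorm_le_opSemiVar L' A x hA hd h1)

theorem opSemiVar_smul (L : Lp E p P →L[ℝ] F) (c : ℝ) :
    opSemiVar P p (c • L) = (‖c‖₊ : ℝ≥0∞) * opSemiVar P p L := by
  simp_rw [opSemiVar, smul_apply, nnnorm_smul, ENNReal.coe_mul,
    ← Finset.mul_sum, ← ENNReal.mul_iSup]

theorem lowerSemicontinuous_opSemiVar :
    LowerSemicontinuous (opSemiVar (E := E) (F := F) P p) := by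
  refine lowerSemicontinuous_iSup fun _ => lowerSemicontinuous_iSup fun _ =>
    lowerSemicontinuous_iSup fun _ => lowerSemicontinuous_iSup fun _ =>
    lowerSemicontinuous_iSup fun _ => lowerSemicontinuous_iSup fun _ =>
    Continuous.lowerSemicontinuous ?_
  exact continuous_finsetSum _ fun i _ =>
    ENNReal.continuous_coe.comp (continuous_nnnorm.comp (continuous_id.clm_apply continuous_const))

theorem opSemiVar_le_of_tendsto {ι : Type*} {l : Filter ι} [l.NeBot]
    {T : ι → Lp E p P →L[ℝ] F} {L : Lp E p P →L[ℝ] F} (hT : Tendsto T l (𝓝 L)) {C : ℝ≥0∞}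
    (hC : ∀ᶠ k in l, opSemiVar P p (T k) ≤ C) : opSemiVar P p L ≤ C :=
  (lowerSemicontinuous_opSemiVar.isClosed_preimage C).mem_of_tendsto hT hC

theorem enorm_apply_le_opSemiVar_of_mem_simpleFunc (L : Lp E p P →L[ℝ] F) {f : Lp E p P}
    (hf : f ∈ Lp.simpleFunc E p P) (h1 : ‖f‖ₑ ≤ 1) : ‖L f‖ₑ ≤ opSemiVar P p L := by
  obtain ⟨s, hs⟩ := hf
  have hfs : f =ᵐ[P] s := by rw [← hs]; exact AEEqFun.coeFn_mk _ _
  have hsum (ω : Ω) : ∑ y : s.range, (s ⁻¹' {(y : E)}).indicator (fun _ => (y : E)) ω = s ω := by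
    rw [Finset.sum_coe_sort s.range (fun y => (s ⁻¹' {y}).indicator (fun _ => y) ω),
      SimpleFunc.sum_range_indicator_preimage_singleton]
  set v : s.range → Lp E p P := fun y =>
    indicatorConstLp p (s.measurableSet_fiber y) (measure_ne_top P _) (y : E)
  have hdecomp : f = ∑ y, v y := by
    refine Lp.ext ?_
    filter_upwards [hfs, Lp.coeFn_fun_finsetSum Finset.univ v,
      eventually_all.2 fun y => (indicatorConstLp_coeFn : ⇑(v y) =ᵐ[P] _)] with ω hfω hv hy
    rw [hfω, hv, ← hsum ω]
    exact Finset.sum_congr rfl fun y _ => (hy y).symm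
  have hdisj : Pairwise (Function.onFun Disjoint fun y : s.range => s ⁻¹' {(y : E)}) :=
    fun y z hyz => (Set.disjoint_singleton.2 (Subtype.coe_ne_coe.2 hyz)).preimage s
  have hnorm : eLpNorm (fun ω => ∑ y : s.range, (s ⁻¹' {(y : E)}).indicator
      (fun _ => (y : E)) ω) p P ≤ 1 := by
    rwa [funext hsum, ← eLpNorm_congr_ae hfs, ← Lp.enorm_def]
  calc ‖L f‖ₑ = ‖∑ y, L (v y)‖ₑ := by rw [hdecomp, map_sum]
    _ ≤ ∑ y, ‖L (v y)‖ₑ := enorm_sum_le _ _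
    _ ≤ opSemiVar P p L := sum_enorm_le_opSemiVar L _ _ _ hdisj hnorm

theorem enorm_apply_le_opSemiVar (hp : p ≠ ∞) (L : Lp E p P →L[ℝ] F) {f : Lp E p P}
    (hf : ‖f‖ ≤ 1) : ‖L f‖ₑ ≤ opSemiVar P p L := by
  have hclosed : IsClosed {g : Lp E p P | ‖L g‖ₑ ≤ opSemiVar P p L} :=
    isClosed_le (continuous_enorm.comp L.continuous) continuous_const
  have hball : Metric.ball 0 1 ∩ (Lp.simpleFunc E p P : Set (Lp E p P))
      ⊆ {g | ‖L g‖ₑ ≤ opSemiVar P p L} := fun g ⟨hg1, hg⟩ =>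
    enorm_apply_le_opSemiVar_of_mem_simpleFunc L hg <| by
      rw [← ofReal_norm, ← ENNReal.ofReal_one]
      exact ENNReal.ofReal_le_ofReal (mem_ball_zero_iff.1 hg1).le
  have hdense : Metric.closedBall (0 : Lp E p P) 1
      ⊆ closure (Metric.ball 0 1 ∩ (Lp.simpleFunc E p P : Set (Lp E p P))) := by
    rw [← closure_ball 0 one_ne_zero]
    exact closure_minimal ((Lp.simpleFunc.dense hp).open_subset_closure_inter Metric.isOpen_ball)
      isClosed_closure
  exact closure_minimal hball hclosed (hdense (mem_closedBall_zero_iff.2 hf))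

theorem opNorm_le_opSemiVar (hp : p ≠ ∞) {L : Lp E p P →L[ℝ] F} (hL : opSemiVar P p L ≠ ∞) :
    ‖L‖ ≤ (opSemiVar P p L).toReal :=
  L.opNorm_le_of_unit_norm toReal_nonneg fun _ hf =>
    toReal_mono hL (enorm_apply_le_opSemiVar hp L hf.le) |>.trans_eq' (toReal_enorm _).symm

theorem eq_zero_of_opSemiVar_eq_zero (hp : p ≠ ∞) {L : Lp E p P →L[ℝ] F}
    (hL : opSemiVar P p L = 0) : L = 0 :=
  norm_le_zero_iff.1 <| (opNorm_le_opSemiVar hp (hL ▸ zero_ne_top)).trans_eq (by simp [hL])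

theorem cauchySeq_of_opSemiVar_sub (hp : p ≠ ∞) {T : ℕ → Lp E p P →L[ℝ] F}
    (hT : ∀ ε : ℝ≥0∞, 0 < ε → ∃ N : ℕ, ∀ j k, N ≤ j → N ≤ k → opSemiVar P p (T j - T k) < ε) :
    CauchySeq T := by
  refine Metric.cauchySeq_iff'.2 fun ε hε => ?_
  obtain ⟨N, hN⟩ := hT (ENNReal.ofReal ε) (ofReal_pos.2 hε)
  refine ⟨N, fun j hj => ?_⟩
  have hjN := hN j N hj le_rfl
  rw [dist_eq_norm]
  exact (opNorm_le_opSemiVar hp hjN.ne_top).trans_lt (toReal_lt_of_lt_ofReal hjN)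

theorem exists_tendsto_opSemiVar_sub [CompleteSpace F] (hp : p ≠ ∞)
    (T : ℕ → Lp E p P →L[ℝ] F) (hfin : ∀ j, opSemiVar P p (T j) < ∞)
    (hT : ∀ ε : ℝ≥0∞, 0 < ε → ∃ N : ℕ, ∀ j k, N ≤ j → N ≤ k → opSemiVar P p (T j - T k) < ε) :
    ∃ L : Lp E p P →L[ℝ] F, opSemiVar P p L < ∞ ∧
      Tendsto (fun j => opSemiVar P p (T j - L)) atTop (𝓝 0) := by
  obtain ⟨L, hL⟩ := cauchySeq_tendsto_of_complete (cauchySeq_of_opSemiVar_sub hp hT)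
  have hclose : ∀ ε : ℝ≥0∞, 0 < ε → ∃ N : ℕ, ∀ j ≥ N, opSemiVar P p (T j - L) ≤ ε := by
    intro ε hε
    obtain ⟨N, hN⟩ := hT ε hε
    refine ⟨N, fun j hj => opSemiVar_le_of_tendsto (tendsto_const_nhds.sub hL) ?_⟩
    filter_upwards [eventually_ge_atTop N] with k hk using (hN j k hj hk).le
  refine ⟨L, ?_, ENNReal.tendsto_atTop_zero.2 hclose⟩
  obtain ⟨N, hN⟩ := hT 1 one_pos
  have hbound : opSemiVar P p L ≤ opSemiVar P p (T N) + 1 := by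
    refine opSemiVar_le_of_tendsto hL ?_
    filter_upwards [eventually_ge_atTop N] with k hk
    calc opSemiVar P p (T k) = opSemiVar P p (T N + (T k - T N)) := by rw [add_sub_cancel]
      _ ≤ opSemiVar P p (T N) + opSemiVar P p (T k - T N) := opSemiVar_add_le _ _
      _ ≤ opSemiVar P p (T N) + 1 := by gcongr; exact (hN k N hk le_rfl).le
  exact hbound.trans_lt (add_lt_top.2 ⟨hfin N, one_lt_top⟩)

end

theorem stmt4_general {Ω E F : Type*} [MeasurableSpace Ω] (P : Measure Ω) [IsProbabilityMeasure P]
    [NormedAddCommGroup E] [NormedSpace ℝ E]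
    [NormedAddCommGroup F] [NormedSpace ℝ F] [CompleteSpace F]
    (p : ℝ≥0∞) [Fact (1 ≤ p)] (hp' : p ≠ ∞) :
    (∀ L L' : Lp E p P →L[ℝ] F,
        opSemiVar P p (L + L') ≤ opSemiVar P p L + opSemiVar P p L') ∧
    (∀ (L : Lp E p P →L[ℝ] F) (c : ℝ),
        opSemiVar P p (c • L) = (‖c‖₊ : ℝ≥0∞) * opSemiVar P p L) ∧
    (∀ L : Lp E p P →L[ℝ] F, opSemiVar P p L = 0 → L = 0) ∧
    (∀ Lseq : ℕ → (Lp E p P →L[ℝ] F),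
        (∀ j, opSemiVar P p (Lseq j) < ∞) →
        (∀ ε : ℝ≥0∞, 0 < ε → ∃ N : ℕ, ∀ j k, N ≤ j → N ≤ k →
          opSemiVar P p (Lseq j - Lseq k) < ε) →
        ∃ L : Lp E p P →L[ℝ] F, opSemiVar P p L < ∞ ∧
          Tendsto (fun j => opSemiVar P p (Lseq j - L)) atTop (nhds 0)) :=
  ⟨opSemiVar_add_le, opSemiVar_smul, fun _ => eq_zero_of_opSemiVar_eq_zero hp',
    exists_tendsto_opSemiVar_sub hp'⟩

/-- The space `Λ_p^ℙ(E,F)` of continuous linear operators `L : L^p(Ω,E,ℙ) → F` with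
finite `p`-semivariation norm, equipped with `⦀·⦀_{p,ℙ}`, is a Banach space: the
semivariation norm is subadditive, absolutely homogeneous, definite, and the space is
complete. -/
theorem stmt4 {Ω E F : Type*} [MeasurableSpace Ω] (P : Measure Ω) [IsProbabilityMeasure P]
    [NormedAddCommGroup E] [NormedSpace ℝ E] [TopologicalSpace.SeparableSpace E]
    [NormedAddCommGroup F] [NormedSpace ℝ F] [CompleteSpace F]
    (p : ℝ≥0∞) [Fact (1 ≤ p)] (hp' : p ≠ ∞) :
    (∀ L L' : Lp E p P →L[ℝ] F,
        opSemiVar P p (L + L') ≤ opSemiVar P p L + opSemiVar P p L') ∧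
    (∀ (L : Lp E p P →L[ℝ] F) (c : ℝ),
        opSemiVar P p (c • L) = (‖c‖₊ : ℝ≥0∞) * opSemiVar P p L) ∧
    (∀ L : Lp E p P →L[ℝ] F, opSemiVar P p L = 0 → L = 0) ∧
    (∀ Lseq : ℕ → (Lp E p P →L[ℝ] F),
        (∀ j, opSemiVar P p (Lseq j) < ∞) →
        (∀ ε : ℝ≥0∞, 0 < ε → ∃ N : ℕ, ∀ j k, N ≤ j → N ≤ k →
          opSemiVar P p (Lseq j - Lseq k) < ε) →
        ∃ L : Lp E p P →L[ℝ] F, opSemiVar P p L < ∞ ∧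
          Tendsto (fun j => opSemiVar P p (Lseq j - L)) atTop (nhds 0)) :=
  stmt4_general P p hp'
end
end

section
/- Let 1 ≤ p < ∞, 1/p + 1/q = 1, E, F Banach spaces with E separable, and m : F → L(E,F) a countably additive vector measure of finite variation with |m| absolutely continuous with respect to ℙ. If the Radon–Nikodym derivative of |m| with respect to ℙ is g (i.e. |m| = g dℙ) and A ∈ F satisfies m̄_q(A) < ∞, then g·1_A ∈ L^q(Ω,ℙ) and m̄_q(A) = (∫ |g|^q 1_A dℙ)^{1/q}. -/
/-!
Hölder's inequality gives `m̄_q(A) ≤ ‖g 1_A‖_q`, because `‖m(B) x‖ ≤ |m|(B) ‖x‖ = ‖x‖ ∫_B g`.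
Conversely, a simple function `ψ = ∑ cᵢ 1_{Bᵢ} ≥ 0` with `Bᵢ ⊆ A` and `‖ψ‖_p ≤ 1` becomes an
admissible vector-valued step function once each `Bᵢ` is refined into a partition almost
realising `|m|(Bᵢ)` and each piece is given an almost norming unit vector, scaled by `cᵢ`; hence
`∫ ψ g 1_A ≤ m̄_q(A)`. Testing this against the extremal functions of Hölder's inequality,
`ψ ∝ φ^{1/p}` for simple `φ ≤ (g 1_A)^q` (or `ψ ∝ 1_{g 1_A > c}` when `q = ∞`), recovers
`‖g 1_A‖_q`.
-/

open MeasureTheory ENNReal Filter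

noncomputable section

/-- Countable additivity of a vector-valued set function. -/
def CountablyAdditiveM {Ω X : Type*} [MeasurableSpace Ω] [NormedAddCommGroup X]
    (m : Set Ω → X) : Prop :=
  ∀ As : ℕ → Set Ω, (∀ i, MeasurableSet (As i)) → Pairwise (Function.onFun Disjoint As) →
    Tendsto (fun n => ∑ i ∈ Finset.range n, m (As i)) atTop (nhds (m (⋃ i, As i)))

/-- Total variation of a vector-valued set function over disjoint measurable subsets. -/
def varM {Ω X : Type*} [MeasurableSpace Ω] [NormedAddCommGroup X]
    (m : Set Ω → X) (A : Set Ω) : ℝ≥0∞ :=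
  ⨆ (n : ℕ) (As : Fin n → Set Ω) (_ : ∀ i, MeasurableSet (As i))
    (_ : Pairwise (Function.onFun Disjoint As)) (_ : ∀ i, As i ⊆ A),
    ∑ i, (‖m (As i)‖₊ : ℝ≥0∞)

/-- The `q`-variation of `m` relative to `ℙ`, indexed by the conjugate (constraint)
exponent `p` (`1/p + 1/q = 1`). -/
def qVar {Ω E F : Type*} [MeasurableSpace Ω] [NormedAddCommGroup E] [NormedSpace ℝ E]
    [NormedAddCommGroup F] [NormedSpace ℝ F]
    (P : Measure Ω) (m : Set Ω → (E →L[ℝ] F)) (p : ℝ≥0∞) (A : Set Ω) : ℝ≥0∞ :=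
  ⨆ (n : ℕ) (As : Fin n → Set Ω) (xs : Fin n → E) (_ : ∀ i, MeasurableSet (As i))
    (_ : Pairwise (Function.onFun Disjoint As)) (_ : ∀ i, As i ⊆ A)
    (_ : eLpNorm (fun ω => ∑ i, (As i).indicator (fun _ => xs i) ω) p P ≤ 1),
    ∑ i, (‖m (As i) (xs i)‖₊ : ℝ≥0∞)

open NNReal

theorem Pairwise.sum_indicator_apply_of_mem {ι α M : Type*} [Fintype ι] [AddCommMonoid M]
    {s : ι → Set α} (hs : Pairwise (Function.onFun Disjoint s)) (f : ι → α → M) {i : ι} {a : α}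
    (ha : a ∈ s i) : ∑ j, (s j).indicator (f j) a = f i a := by
  rw [Finset.sum_eq_single i (fun j _ hji => Set.indicator_of_notMem
    (fun haj => Set.disjoint_left.mp (hs hji) haj ha) _) (by simp)]
  exact Set.indicator_of_mem ha _

theorem ContinuousLinearMap.exists_mul_nnnorm_le_nnnorm_apply {E F : Type*}
    [NormedAddCommGroup E] [NormedSpace ℝ E] [NormedAddCommGroup F] [NormedSpace ℝ F]
    (T : E →L[ℝ] F) {t : ℝ≥0} (ht : t < 1) : ∃ x, ‖x‖ ≤ 1 ∧ t * ‖T‖₊ ≤ ‖T x‖₊ := by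
  rcases eq_or_ne ‖T‖₊ 0 with hT | hT
  · exact ⟨0, by simp, by simp [hT]⟩
  obtain ⟨x, hx, hTx⟩ := T.exists_lt_apply_of_lt_opNNNorm
    (mul_lt_of_lt_one_left (pos_iff_ne_zero.mpr hT) ht)
  exact ⟨x, mod_cast hx.le, hTx.le⟩

theorem Pairwise.apply_sum_indicator {ι α M N : Type*} [Fintype ι] [AddCommMonoid M]
    [AddCommMonoid N] {s : ι → Set α} (hs : Pairwise (Function.onFun Disjoint s))
    (f : ι → α → M) (g : α → M → N) (hg : ∀ a, g a 0 = 0) (a : α) :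
    g a (∑ j, (s j).indicator (f j) a) = ∑ j, (s j).indicator (fun a => g a (f j a)) a := by
  by_cases ha : ∃ i, a ∈ s i
  · obtain ⟨i, hai⟩ := ha
    rw [hs.sum_indicator_apply_of_mem _ hai, hs.sum_indicator_apply_of_mem _ hai]
  · push Not at ha
    simp [Set.indicator_of_notMem (ha _), hg]

theorem MeasureTheory.SimpleFunc.lintegral_coe_mul_eq_sum {α : Type*} [MeasurableSpace α]
    {μ : Measure α} (ψ : SimpleFunc α ℝ≥0) {f : α → ℝ≥0∞} (hf : Measurable f) :
    ∫⁻ a, ψ a * f a ∂μ = ∑ y ∈ ψ.range, (y : ℝ≥0∞) * ∫⁻ a in ψ ⁻¹' {y}, f a ∂μ := by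
  calc ∫⁻ a, ψ a * f a ∂μ = ∫⁻ a, (ψ.map ((↑) : ℝ≥0 → ℝ≥0∞)) a ∂μ.withDensity f := by
        rw [lintegral_withDensity_eq_lintegral_mul _ hf (ψ.map _).measurable]
        simp [mul_comm]
    _ = ∑ y ∈ ψ.range, (y : ℝ≥0∞) * ∫⁻ a in ψ ⁻¹' {y}, f a ∂μ := by
        rw [SimpleFunc.lintegral_eq_lintegral, SimpleFunc.map_lintegral]
        simp only [withDensity_apply _ (ψ.measurableSet_fiber _)]

section Duality

variable {α : Type*} [MeasurableSpace α] {μ : Measure α} [IsFiniteMeasure μ] {h : α → ℝ≥0∞}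
  {Q : ℝ≥0∞}

theorem eLpNorm_top_le_of_forall_lintegral_mul_le (hh : Measurable h)
    (H : ∀ ψ : SimpleFunc α ℝ≥0, eLpNorm (fun a => (ψ a : ℝ≥0∞)) 1 μ ≤ 1 →
      ∫⁻ a, ψ a * h a ∂μ ≤ Q) :
    eLpNorm h ∞ μ ≤ Q := by
  rw [eLpNorm_exponent_top, eLpNormEssSup]
  simp only [enorm_eq_self]
  refine le_of_forall_lt_imp_le_of_dense fun c hc => ?_
  set S := {a | c < h a}
  have hS : MeasurableSet S := measurableSet_lt measurable_const hh
  have hμS : μ S ≠ 0 := fun h0 =>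
    hc.not_ge (essSup_le_of_ae_le c (ae_iff.mpr (by simpa only [not_le] using h0)))
  obtain ⟨r, hr⟩ : ∃ r : ℝ≥0, (r : ℝ≥0∞) = (μ S)⁻¹ :=
    ⟨_, ENNReal.coe_toNNReal (ENNReal.inv_ne_top.mpr hμS)⟩
  let ψ := (SimpleFunc.const α r).restrict S
  have hψ (a : α) : (ψ a : ℝ≥0∞) = S.indicator (fun _ => (μ S)⁻¹) a := by
    rw [SimpleFunc.restrict_apply _ hS, ← hr]
    by_cases ha : a ∈ S <;> simp [ha]
  have hψ1 : eLpNorm (fun a => (ψ a : ℝ≥0∞)) 1 μ ≤ 1 := by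
    simp only [eLpNorm_one_eq_lintegral_enorm, enorm_eq_self, hψ]
    rw [lintegral_indicator_const hS, ENNReal.inv_mul_cancel hμS (measure_ne_top _ _)]
  calc c = (μ S)⁻¹ * (c * μ S) := by
        rw [mul_left_comm, ENNReal.inv_mul_cancel hμS (measure_ne_top _ _), mul_one]
    _ ≤ (μ S)⁻¹ * ∫⁻ a in S, h a ∂μ := by
        rw [← setLIntegral_const]
        gcongr (μ S)⁻¹ * ?_
        exact setLIntegral_mono hh fun a (ha : a ∈ S) => le_of_lt ha
    _ = ∫⁻ a, ψ a * h a ∂μ := by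
        simp only [hψ, ← Set.indicator_mul_left]
        rw [lintegral_indicator hS, lintegral_const_mul _ hh]
    _ ≤ Q := H ψ hψ1

theorem eLpNorm_le_of_forall_lintegral_mul_le_of_ne_top {p q : ℝ≥0∞} [p.HolderConjugate q]
    (hp : p ≠ ∞) (hq : q ≠ ∞)
    (H : ∀ ψ : SimpleFunc α ℝ≥0, eLpNorm (fun a => (ψ a : ℝ≥0∞)) p μ ≤ 1 →
      ∫⁻ a, ψ a * h a ∂μ ≤ Q) :
    eLpNorm h q μ ≤ Q := by
  set a := p.toReal with ha_def
  set b := q.toReal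
  have hab : a.HolderConjugate b := ENNReal.HolderConjugate.toReal (by
    simpa [a] using (ENNReal.toReal_lt_toReal ENNReal.one_ne_top hp).mpr
      ((ENNReal.HolderConjugate.lt_top_iff_one_lt q p).mp hq.lt_top))
  have ha : 0 ≤ a⁻¹ := inv_nonneg.mpr hab.nonneg
  have hb : 0 < b := hab.symm.pos
  rw [eLpNorm_eq_lintegral_rpow_enorm_toReal (ENNReal.HolderConjugate.ne_zero q p) hq, one_div,
    ENNReal.rpow_inv_le_iff hb, lintegral_eq_nnreal]
  simp only [enorm_eq_self]
  refine iSup₂_le fun φ hφ => ?_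
  have hφm : Measurable fun x => (φ x : ℝ≥0∞) := φ.measurable.coe_nnreal_ennreal
  set I := (φ.map ((↑) : ℝ≥0 → ℝ≥0∞)).lintegral μ
  have hI : ∫⁻ x, φ x ∂μ = I := by
    simp only [I, ← SimpleFunc.lintegral_eq_lintegral, SimpleFunc.coe_map, Function.comp_apply]
  rcases eq_or_ne I 0 with hI0 | hI0
  · simp [hI0]
  have hItop : I ≠ ∞ := by
    simp only [I, SimpleFunc.map_lintegral]
    exact ENNReal.sum_ne_top.mpr fun y _ =>
      ENNReal.mul_ne_top ENNReal.coe_ne_top (measure_ne_top _ _)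
  -- the extremal function of Hölder's inequality for `φ ^ (1 / b)`, normalised in `L^p`
  let ψ : SimpleFunc α ℝ≥0 := φ.map fun y => (y / I.toNNReal) ^ a⁻¹
  have hψ (x : α) : (ψ x : ℝ≥0∞) = ((φ x : ℝ≥0∞) * I⁻¹) ^ a⁻¹ := by
    rw [← ENNReal.coe_toNNReal hItop, ← ENNReal.coe_inv (ENNReal.toNNReal_pos hI0 hItop).ne']
    simp [ψ, ENNReal.coe_rpow_of_nonneg _ ha, div_eq_mul_inv]
  have hψp : eLpNorm (fun x => (ψ x : ℝ≥0∞)) p μ ≤ 1 := by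
    rw [eLpNorm_eq_lintegral_rpow_enorm_toReal (ENNReal.HolderConjugate.ne_zero p q) hp]
    simp only [enorm_eq_self, hψ, ← ENNReal.rpow_mul, ← ha_def, inv_mul_cancel₀ hab.ne_zero,
      ENNReal.rpow_one]
    rw [lintegral_mul_const _ hφm, hI, ENNReal.mul_inv_cancel hI0 hItop, ENNReal.one_rpow]
  have hψφ (x : α) : (ψ x : ℝ≥0∞) * (φ x : ℝ≥0∞) ^ b⁻¹ = φ x * I⁻¹ ^ a⁻¹ := by
    rw [hψ, ENNReal.mul_rpow_of_nonneg _ _ ha, mul_right_comm,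
      ← ENNReal.rpow_add_of_nonneg _ _ ha (inv_nonneg.mpr hb.le), hab.inv_add_inv_eq_one,
      ENNReal.rpow_one]
  have key : I ^ b⁻¹ ≤ Q := calc
    I ^ b⁻¹ = I * I⁻¹ ^ a⁻¹ := by
        rw [← hab.one_sub_inv, ENNReal.rpow_sub _ _ hI0 hItop, ENNReal.rpow_one, div_eq_mul_inv,
          ENNReal.inv_rpow]
    _ = ∫⁻ x, ψ x * (φ x : ℝ≥0∞) ^ b⁻¹ ∂μ := by
        simp only [hψφ]
        rw [lintegral_mul_const _ hφm, hI]
    _ ≤ ∫⁻ x, ψ x * h x ∂μ := lintegral_mono fun x => by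
        gcongr
        exact (ENNReal.rpow_inv_le_iff hb).mpr (hφ x)
    _ ≤ Q := H ψ hψp
  exact (ENNReal.rpow_inv_le_iff hb).mp key

theorem eLpNorm_le_of_forall_lintegral_mul_le {p q : ℝ≥0∞} [p.HolderConjugate q] (hp : p ≠ ∞)
    (hh : Measurable h)
    (H : ∀ ψ : SimpleFunc α ℝ≥0, eLpNorm (fun a => (ψ a : ℝ≥0∞)) p μ ≤ 1 →
      ∫⁻ a, ψ a * h a ∂μ ≤ Q) :
    eLpNorm h q μ ≤ Q := by
  rcases eq_or_ne q ∞ with rfl | hq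
  · obtain rfl : p = 1 := (ENNReal.HolderConjugate.eq_top_iff_eq_one ∞ p).mp rfl
    exact eLpNorm_top_le_of_forall_lintegral_mul_le hh H
  · exact eLpNorm_le_of_forall_lintegral_mul_le_of_ne_top hp hq H

end Duality

section VectorMeasure

variable {Ω : Type*} [MeasurableSpace Ω]

theorem nnnorm_le_varM {X : Type*} [NormedAddCommGroup X] (m : Set Ω → X) {B : Set Ω}
    (hB : MeasurableSet B) : (‖m B‖₊ : ℝ≥0∞) ≤ varM m B :=
  le_iSup₂_of_le 1 (fun _ => B) <| le_iSup₂_of_le (fun _ => hB)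
    (fun i j hij => absurd (Subsingleton.elim i j) hij) <|
    le_iSup_of_le (fun _ => subset_rfl) (by simp)

theorem exists_mul_varM_le_sum {X : Type*} [NormedAddCommGroup X] (m : Set Ω → X) {B : Set Ω}
    (hB : varM m B ≠ ∞) {t : ℝ≥0∞} (ht : t < 1) :
    ∃ (n : ℕ) (C : Fin n → Set Ω), (∀ j, MeasurableSet (C j)) ∧
      Pairwise (Function.onFun Disjoint C) ∧ (∀ j, C j ⊆ B) ∧
      t * varM m B ≤ ∑ j, (‖m (C j)‖₊ : ℝ≥0∞) := by
  rcases eq_or_ne (varM m B) 0 with h0 | h0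
  · exact ⟨0, Fin.elim0, Fin.rec0, fun i => i.elim0, Fin.rec0, by simp [h0]⟩
  have hlt : t * varM m B < varM m B := by
    simpa using ENNReal.mul_lt_mul_left h0 hB ht
  simp only [varM, lt_iSup_iff] at hlt
  obtain ⟨n, C, hC, hdisj, hCB, hsum⟩ := hlt
  exact ⟨n, C, hC, hdisj, hCB, hsum.le⟩

variable {E F : Type*} [NormedAddCommGroup E] [NormedSpace ℝ E]
  [NormedAddCommGroup F] [NormedSpace ℝ F]

theorem le_qVar {ι : Type*} [Fintype ι] (P : Measure Ω) (m : Set Ω → (E →L[ℝ] F)) (p : ℝ≥0∞)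
    {A : Set Ω} {B : ι → Set Ω} (x : ι → E) (hB : ∀ i, MeasurableSet (B i))
    (hdisj : Pairwise (Function.onFun Disjoint B)) (hBA : ∀ i, B i ⊆ A)
    (hx : eLpNorm (fun ω => ∑ i, (B i).indicator (fun _ => x i) ω) p P ≤ 1) :
    ∑ i, (‖m (B i) (x i)‖₊ : ℝ≥0∞) ≤ qVar P m p A := by
  let e := (Fintype.equivFin ι).symm
  rw [← e.sum_comp]
  refine le_iSup₂_of_le (Fintype.card ι) (B ∘ e) <| le_iSup₂_of_le (x ∘ e) (fun k => hB _) <|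
    le_iSup₂_of_le (hdisj.comp_of_injective e.injective) (fun k => hBA _) <|
    le_iSup_of_le ?_ le_rfl
  convert hx using 3 with ω
  exact e.sum_comp (fun i => (B i).indicator (fun _ => x i) ω)

theorem sum_mul_varM_le_qVar {ι : Type*} [Fintype ι] (P : Measure Ω) (m : Set Ω → (E →L[ℝ] F))
    (p : ℝ≥0∞) {A : Set Ω} {B : ι → Set Ω} {c : ι → ℝ≥0} {ψ : Ω → ℝ≥0∞}
    (hdisj : Pairwise (Function.onFun Disjoint B)) (hBA : ∀ i, B i ⊆ A)
    (hvar : ∀ i, varM m (B i) ≠ ∞) (hcψ : ∀ i, ∀ ω ∈ B i, (c i : ℝ≥0∞) ≤ ψ ω)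
    (hψ : eLpNorm ψ p P ≤ 1) :
    ∑ i, (c i : ℝ≥0∞) * varM m (B i) ≤ qVar P m p A := by
  refine ENNReal.le_of_forall_lt_one_mul_le fun t ht => ?_
  choose n C hC hCdisj hCB htC using fun i => exists_mul_varM_le_sum m (hvar i) ht
  refine ENNReal.le_of_forall_lt_one_mul_le fun s hs => ?_
  lift s to ℝ≥0 using hs.ne_top
  choose x hx hsx using fun k : Σ i, Fin (n i) =>
    (m (C k.1 k.2)).exists_mul_nnnorm_le_nnnorm_apply (mod_cast hs : s < 1)
  let C' : (Σ i, Fin (n i)) → Set Ω := fun k => C k.1 k.2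
  let x' : (Σ i, Fin (n i)) → E := fun k => (c k.1 : ℝ) • x k
  have hC'disj : Pairwise (Function.onFun Disjoint C') := by
    rintro ⟨i, j⟩ ⟨i', j'⟩ hne
    rcases eq_or_ne i i' with rfl | hii
    · exact hCdisj i fun hjj => hne (congrArg (Sigma.mk i) hjj)
    · exact (hdisj hii).mono (hCB i j) (hCB i' j')
  have hx' : eLpNorm (fun ω => ∑ k, (C' k).indicator (fun _ => x' k) ω) p P ≤ 1 := by
    refine le_trans (eLpNorm_mono_enorm fun ω => ?_) hψ
    rw [enorm_eq_self]
    by_cases hω : ∃ k, ω ∈ C' k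
    · obtain ⟨⟨i, j⟩, hωk⟩ := hω
      rw [hC'disj.sum_indicator_apply_of_mem _ hωk]
      calc ‖x' ⟨i, j⟩‖ₑ ≤ c i := by
            simpa [x', enorm_smul] using mul_le_of_le_one_right'
              (ENNReal.ofReal_le_one.mpr (hx ⟨i, j⟩) : ENNReal.ofReal ‖x ⟨i, j⟩‖ ≤ 1)
        _ ≤ ψ ω := hcψ i ω (hCB i j hωk)
    · push Not at hω
      simp [Set.indicator_of_notMem (hω _)]
  calc (s : ℝ≥0∞) * (t * ∑ i, c i * varM m (B i))
      = ∑ i, (c i : ℝ≥0∞) * (s * (t * varM m (B i))) := by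
        simp only [Finset.mul_sum]
        exact Finset.sum_congr rfl fun i _ => by ring
    _ ≤ ∑ i, (c i : ℝ≥0∞) * ∑ j, (s * ‖m (C i j)‖₊ : ℝ≥0∞) := by
        gcongr with i
        rw [← Finset.mul_sum]
        gcongr
        exact htC i
    _ ≤ ∑ i, ∑ j, (c i : ℝ≥0∞) * ‖m (C i j) (x ⟨i, j⟩)‖₊ := by
        gcongr with i _ j
        rw [Finset.mul_sum]
        gcongr with j
        exact_mod_cast hsx ⟨i, j⟩
    _ = ∑ k, (‖m (C' k) (x' k)‖₊ : ℝ≥0∞) := by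
        rw [Fintype.sum_sigma]
        simp [C', x', nnnorm_smul]
    _ ≤ qVar P m p A :=
        le_qVar P m p x' (fun k => hC k.1 k.2) hC'disj (fun k => (hCB k.1 k.2).trans (hBA k.1)) hx'

theorem qVar_le_eLpNorm (P : Measure Ω) (m : Set Ω → (E →L[ℝ] F)) {p q : ℝ≥0∞}
    [p.HolderConjugate q] {A : Set Ω} {G : Type*} [NormedAddCommGroup G] {f : Ω → G}
    (hf : AEStronglyMeasurable f P)
    (hvar : ∀ B, MeasurableSet B → B ⊆ A → varM m B ≤ ∫⁻ ω in B, ‖f ω‖ₑ ∂P) :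
    qVar P m p A ≤ eLpNorm f q P := by
  simp only [qVar, iSup_le_iff]
  intro n B x hB hdisj hBA hx
  set s := fun ω => ∑ i, (B i).indicator (fun _ => x i) ω
  have hs : AEStronglyMeasurable s P :=
    (Finset.stronglyMeasurable_fun_sum _ fun i _ =>
      stronglyMeasurable_const.indicator (hB i)).aestronglyMeasurable
  calc ∑ i, (‖m (B i) (x i)‖₊ : ℝ≥0∞)
      ≤ ∑ i, ‖x i‖ₑ * ∫⁻ ω in B i, ‖f ω‖ₑ ∂P := by
        gcongr with i
        calc (‖m (B i) (x i)‖₊ : ℝ≥0∞) ≤ ‖m (B i)‖₊ * ‖x i‖₊ :=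
              mod_cast (m (B i)).le_opNNNorm (x i)
          _ ≤ ‖x i‖ₑ * ∫⁻ ω in B i, ‖f ω‖ₑ ∂P := by
              rw [mul_comm, enorm_eq_nnnorm]
              gcongr
              exact (nnnorm_le_varM m (hB i)).trans (hvar _ (hB i) (hBA i))
    _ = ∫⁻ ω, ‖s ω‖ₑ * ‖f ω‖ₑ ∂P := by
        have hsf : ∀ ω, ‖s ω‖ₑ * ‖f ω‖ₑ =
            ∑ i, (B i).indicator (fun ω => ‖x i‖ₑ * ‖f ω‖ₑ) ω :=
          hdisj.apply_sum_indicator _ (fun ω v => ‖v‖ₑ * ‖f ω‖ₑ) fun _ => by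
            rw [enorm_zero, zero_mul]
        rw [lintegral_congr hsf, lintegral_finsetSum' _ fun i _ =>
          (hf.enorm.const_mul ‖x i‖ₑ).indicator (hB i)]
        simp_rw [lintegral_indicator (hB _), lintegral_const_mul'' _ hf.enorm.restrict]
    _ = eLpNorm (fun ω => ‖s ω‖ * ‖f ω‖) 1 P := by
        simp [eLpNorm_one_eq_lintegral_enorm, enorm_mul]
    _ ≤ 1 * eLpNorm s p P * eLpNorm f q P :=
        eLpNorm_le_eLpNorm_mul_eLpNorm'_of_norm hs hf (fun u v => ‖u‖ * ‖v‖) 1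
          (ae_of_all _ fun ω => by simp)
    _ ≤ eLpNorm f q P := by
        rw [one_mul]
        exact mul_le_of_le_one_left' hx

theorem lintegral_mul_indicator_le_qVar (P : Measure Ω) (m : Set Ω → (E →L[ℝ] F)) (p : ℝ≥0∞)
    {A : Set Ω} (hA : MeasurableSet A) (hfinvar : ∀ B, MeasurableSet B → varM m B < ∞)
    {G : Ω → ℝ≥0∞} (hG : Measurable G)
    (hdens : ∀ B, MeasurableSet B → B ⊆ A → varM m B = ∫⁻ ω in B, G ω ∂P)
    (ψ : SimpleFunc Ω ℝ≥0) (hψ : eLpNorm (fun ω => (ψ ω : ℝ≥0∞)) p P ≤ 1) :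
    ∫⁻ ω, ψ ω * A.indicator G ω ∂P ≤ qVar P m p A := by
  have hB (y : ℝ≥0) : MeasurableSet (A ∩ ψ ⁻¹' {y}) := hA.inter (ψ.measurableSet_fiber y)
  calc ∫⁻ ω, ψ ω * A.indicator G ω ∂P
      = ∑ y : ψ.range, (y : ℝ≥0∞) * varM m (A ∩ ψ ⁻¹' {(y : ℝ≥0)}) := by
        rw [ψ.lintegral_coe_mul_eq_sum (hG.indicator hA), ← Finset.sum_coe_sort]
        refine Finset.sum_congr rfl fun y _ => ?_
        rw [setLIntegral_indicator hA, hdens _ (hB y) Set.inter_subset_left]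
    _ ≤ qVar P m p A := by
        refine sum_mul_varM_le_qVar P m p (fun y y' hyy' => ?_) (fun _ => Set.inter_subset_left)
          (fun y => (hfinvar _ (hB y)).ne) (fun y ω hω => le_of_eq ?_) hψ
        · exact ((Set.disjoint_singleton.mpr (Subtype.coe_ne_coe.mpr hyy')).preimage ψ).mono
            Set.inter_subset_right Set.inter_subset_right
        · exact congrArg _ hω.2.symm

end VectorMeasure

theorem stmt6_general {Ω E F : Type*} [MeasurableSpace Ω] (P : Measure Ω) [IsProbabilityMeasure P]
    [NormedAddCommGroup E] [NormedSpace ℝ E]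
    [NormedAddCommGroup F] [NormedSpace ℝ F]
    (p q : ℝ≥0∞) (hp' : p ≠ ∞) (hpq : 1 / p + 1 / q = 1)
    (m : Set Ω → (E →L[ℝ] F))
    (hfinvar : ∀ B : Set Ω, MeasurableSet B → varM m B < ∞)
    (g : Ω → ℝ) (hgm : Measurable g) (hg0 : 0 ≤ g)
    (hdens : ∀ B : Set Ω, MeasurableSet B →
      varM m B = ∫⁻ ω in B, ENNReal.ofReal (g ω) ∂P)
    (A : Set Ω) (hA : MeasurableSet A) (hfin : qVar P m p A < ∞) :
    MemLp (A.indicator g) q P ∧ qVar P m p A = eLpNorm (A.indicator g) q P := by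
  have : p.HolderConjugate q :=
    ENNReal.holderConjugate_iff.mpr (by simpa only [one_div] using hpq)
  have hG : Measurable fun ω => ENNReal.ofReal (g ω) := ENNReal.measurable_ofReal.comp hgm
  have hnorm (ω : Ω) : ‖A.indicator g ω‖ₑ = A.indicator (fun ω => ENNReal.ofReal (g ω)) ω := by
    by_cases hω : ω ∈ A <;> simp [hω, Real.enorm_of_nonneg (hg0 ω)]
  have hle : qVar P m p A ≤ eLpNorm (A.indicator g) q P := by
    refine qVar_le_eLpNorm P m (hgm.indicator hA).aestronglyMeasurable fun B hB hBA => ?_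
    simp only [hdens B hB, hnorm, setLIntegral_indicator hA, Set.inter_eq_right.mpr hBA, le_rfl]
  have hge : eLpNorm (A.indicator g) q P ≤ qVar P m p A := by
    simp only [← eLpNorm_enorm (A.indicator g), hnorm]
    exact eLpNorm_le_of_forall_lintegral_mul_le hp' (hG.indicator hA) fun ψ hψ =>
      lintegral_mul_indicator_le_qVar P m p hA hfinvar hG (fun B hB _ => hdens B hB) ψ hψ
  exact ⟨⟨(hgm.indicator hA).aestronglyMeasurable, hge.trans_lt hfin⟩, le_antisymm hle hge⟩

/-- If the variation measure `|m|` of a countably additive vector measure `m` of finite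
variation has Radon–Nikodym density `g ≥ 0` with respect to `ℙ`, and `m̄_q(A) < ∞`, then
`g·1_A ∈ L^q(Ω,ℙ)` and `m̄_q(A) = (∫ |g|^q 1_A dℙ)^{1/q}` (formulated via `eLpNorm`,
which also covers `q = ∞`). -/
theorem stmt6 {Ω E F : Type*} [MeasurableSpace Ω] (P : Measure Ω) [IsProbabilityMeasure P]
    [NormedAddCommGroup E] [NormedSpace ℝ E] [TopologicalSpace.SeparableSpace E]
    [NormedAddCommGroup F] [NormedSpace ℝ F]
    (p q : ℝ≥0∞) (hp : 1 ≤ p) (hp' : p ≠ ∞) (hpq : 1 / p + 1 / q = 1)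
    (m : Set Ω → (E →L[ℝ] F)) (hca : CountablyAdditiveM m)
    (hfinvar : ∀ B : Set Ω, MeasurableSet B → varM m B < ∞)
    (g : Ω → ℝ) (hgm : Measurable g) (hg0 : 0 ≤ g)
    (hdens : ∀ B : Set Ω, MeasurableSet B →
      varM m B = ∫⁻ ω in B, ENNReal.ofReal (g ω) ∂P)
    (A : Set Ω) (hA : MeasurableSet A) (hfin : qVar P m p A < ∞) :
    MemLp (A.indicator g) q P ∧ qVar P m p A = eLpNorm (A.indicator g) q P :=
  stmt6_general P p q hp' hpq m hfinvar g hgm hg0 hdens A hA hfin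
end
end

section
/- Let 1 ≤ p < ∞, m : F → L(E,F) a countably additive vector measure of finite variation with |m| ≪ ℙ, and A ∈ F with m̄_q(A) < ∞ (1/p+1/q=1). Then every Y ∈ L^p(Ω,E,ℙ) supported in A is m-integrable, and ‖∫ Y dm‖_F ≤ ∫ ‖Y‖_E d|m| ≤ (E[‖Y‖_E^p])^{1/p} · m̄_q(A). -/
open MeasureTheory ENNReal Filter

noncomputable section

/-- Integral of a simple function against an operator-valued set function. -/
def simpleIntegral {Ω E F : Type*} [MeasurableSpace Ω]
    [NormedAddCommGroup E] [NormedSpace ℝ E] [NormedAddCommGroup F] [NormedSpace ℝ F]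
    [MeasurableSpace E]
    (m : Set Ω → (E →L[ℝ] F)) (Y : SimpleFunc Ω E) : F :=
  ∑ x ∈ Y.range, m (Y ⁻¹' {x}) x

/-!
Since `‖m B‖ ≤ |m|(B)`, the finitely additive set function `m` is dominated by the finite
measure `ν = |m|`, so `∑ m(Aᵢ)xᵢ` extends continuously to `L¹(ν)` (Mathlib's `setToFun`) with
`‖∫ Y dm‖ ≤ ∫ ‖Y‖ dν`, and the standard simple approximations of `Y` converge in `L¹(ν)` as soon
as `∫ ‖Y‖ dν < ∞`. Everything therefore rests on the Hölder-type bound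
`∫ ‖Y‖ dν ≤ ‖Y‖_p · m̄_q(A)`. For a simple `S` vanishing off `A`, refine each fibre `{S = x}` by a
partition `(B_{x,i})` almost realising `|m|({S = x})` and unit vectors `e_{x,i}` almost realising
`‖m(B_{x,i})‖`. The step function `∑ 1_{B_{x,i}} ‖x‖ e_{x,i}` is dominated pointwise by `‖S‖`,
so its `L^p` norm is at most `‖S‖_p`, and rescaling it to norm `1` in the definition of `m̄_q(A)`
gives the bound for `S`. Fatou's lemma and `L^p` approximation carry it over to `Y`.
-/

namespace CountablyAdditiveM

variable {Ω X : Type*} [MeasurableSpace Ω] [NormedAddCommGroup X] {m : Set Ω → X}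

theorem map_empty (hm : CountablyAdditiveM m) : m ∅ = 0 := by
  have h := hm (fun _ => ∅) (fun _ => .empty) (fun _ _ _ => disjoint_bot_left)
  simp only [Set.iUnion_empty, Finset.sum_const, Finset.card_range] at h
  -- the partial sums are `n • m ∅`, so their increments `m ∅` tend to `m ∅ - m ∅ = 0`
  have h' := ((h.comp (tendsto_add_atTop_nat 1)).sub h)
  simp only [Function.comp_def, succ_nsmul, add_sub_cancel_left, sub_self] at h'
  exact tendsto_nhds_unique tendsto_const_nhds h'

theorem map_union (hm : CountablyAdditiveM m) {B C : Set Ω} (hB : MeasurableSet B)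
    (hC : MeasurableSet C) (hBC : Disjoint B C) : m (B ∪ C) = m B + m C := by
  set As : ℕ → Set Ω := fun k => if k = 0 then B else if k = 1 then C else ∅
  have hAs_empty : ∀ k ≥ 2, As k = ∅ := fun k hk => by
    simp only [As]; rw [if_neg (by omega), if_neg (by omega)]
  have hmeas : ∀ k, MeasurableSet (As k) := fun k => by
    simp only [As]; split_ifs <;> simp [hB, hC]
  have hdisj : Pairwise (Function.onFun Disjoint As) := fun i j hij => by
    simp only [Function.onFun, As]
    split_ifs <;> first | omega | exact hBC | exact hBC.symm | simp
  have hU : ⋃ k, As k = B ∪ C := by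
    ext ω
    simp only [Set.mem_iUnion, Set.mem_union, As]
    constructor
    · rintro ⟨k, hk⟩; split_ifs at hk <;> simp_all
    · rintro (h | h)
      exacts [⟨0, by simpa⟩, ⟨1, by simpa⟩]
  have h := hm As hmeas hdisj
  rw [hU] at h
  refine tendsto_nhds_unique h (tendsto_const_nhds.congr' ?_)
  filter_upwards [eventually_ge_atTop 2] with n hn
  rw [Finset.eventually_constant_sum (fun k hk => by rw [hAs_empty k hk, hm.map_empty]) hn]
  simp [Finset.sum_range_succ, As]

theorem finMeasAdditive (hm : CountablyAdditiveM m) (μ : Measure Ω) : FinMeasAdditive μ m :=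
  fun _ _ hs ht _ _ hst => hm.map_union hs ht hst

end CountablyAdditiveM

section Variation

variable {Ω X : Type*} [MeasurableSpace Ω] [NormedAddCommGroup X] {m : Set Ω → X}

theorem enorm_le_varM {B : Set Ω} (hB : MeasurableSet B) : ‖m B‖ₑ ≤ varM m B :=
  le_iSup_of_le 1 <| le_iSup_of_le (fun _ => B) <| le_iSup_of_le (fun _ => hB) <|
    le_iSup_of_le Subsingleton.pairwise <| le_iSup_of_le (fun _ => subset_rfl) (by simp)

theorem dominatedFinMeasAdditive_of_varM (hm : CountablyAdditiveM m) {ν : Measure Ω}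
    (hν : ∀ B, MeasurableSet B → ν B = varM m B) : DominatedFinMeasAdditive ν m 1 := by
  refine ⟨hm.finMeasAdditive ν, fun s hs hνs => ?_⟩
  rw [one_mul, measureReal_def, ← toReal_enorm, hν s hs]
  exact ENNReal.toReal_mono (hν s hs ▸ hνs.ne) (enorm_le_varM hs)

end Variation

theorem ENNReal.finsetSum_iSup_eq_iSup_sum {α ι : Type*} (s : Finset α) (f : α → ι → ℝ≥0∞) :
    ∑ a ∈ s, ⨆ i, f a i = ⨆ g : α → ι, ∑ a ∈ s, f a (g a) := by
  classical
  have hf : ∀ a, ⨆ i, f a i = ⨆ g : α → ι, f a (g a) := fun a =>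
    (Function.Surjective.iSup_comp (fun i => ⟨fun _ => i, rfl⟩) (f a)).symm
  simp_rw [hf]
  refine ENNReal.finsetSum_iSup fun g₁ g₂ =>
    ⟨fun a => if f a (g₁ a) ≤ f a (g₂ a) then g₂ a else g₁ a, fun a => ?_⟩
  dsimp only
  split_ifs with h
  exacts [⟨h, le_rfl⟩, ⟨le_rfl, (not_le.1 h).le⟩]

section Operator

variable {𝕜 E F : Type*} [DenselyNormedField 𝕜] [NormedAddCommGroup E] [NormedSpace 𝕜 E]
  [NormedAddCommGroup F] [NormedSpace 𝕜 F]

theorem ContinuousLinearMap.enorm_eq_iSup_closedBall (T : E →L[𝕜] F) :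
    ‖T‖ₑ = ⨆ x : Metric.closedBall (0 : E) 1, ‖T x‖ₑ := by
  refine le_antisymm (le_of_forall_lt fun r hr => ?_) (iSup_le fun x => ?_)
  · lift r to NNReal using (hr.trans_le le_top).ne
    obtain ⟨x, hx, hTx⟩ := T.exists_lt_apply_of_lt_opNNNorm (by exact_mod_cast hr)
    exact lt_iSup_iff.2 ⟨⟨x, mem_closedBall_zero_iff.2 (by exact_mod_cast hx.le)⟩,
      by exact_mod_cast hTx⟩
  · have hx : ‖(x : E)‖ₑ ≤ 1 := by
      simpa [enorm_eq_nnnorm, ← NNReal.coe_le_one] using mem_closedBall_zero_iff.1 x.2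
    exact (T.le_opENorm x).trans (mul_le_of_le_one_right' hx)

theorem exists_lt_sum_enorm_apply {ι : Type*} [Fintype ι] (T : ι → E →L[𝕜] F) {c : ℝ≥0∞}
    (hc : c < ∑ i, ‖T i‖ₑ) : ∃ xs : ι → E, (∀ i, ‖xs i‖ ≤ 1) ∧ c < ∑ i, ‖T i (xs i)‖ₑ := by
  simp_rw [ContinuousLinearMap.enorm_eq_iSup_closedBall,
    ENNReal.finsetSum_iSup_eq_iSup_sum, lt_iSup_iff] at hc
  obtain ⟨g, hg⟩ := hc
  exact ⟨fun i => g i, fun i => mem_closedBall_zero_iff.1 (g i).2, hg⟩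

end Operator

theorem norm_sum_indicator_le_of_pairwise_disjoint {ι Ω E : Type*} [Fintype ι]
    [NormedAddCommGroup E] {Cs : ι → Set Ω} (hdisj : Pairwise (Function.onFun Disjoint Cs))
    (ys : ι → E) {ω : Ω} {b : ℝ} (hb : 0 ≤ b) (hys : ∀ i, ω ∈ Cs i → ‖ys i‖ ≤ b) :
    ‖∑ i, (Cs i).indicator (fun _ => ys i) ω‖ ≤ b := by
  by_cases h : ∃ i, ω ∈ Cs i
  · obtain ⟨i, hi⟩ := h
    rw [Finset.sum_eq_single i (fun j _ hji => Set.indicator_of_notMem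
      (fun hj => Set.disjoint_left.1 (hdisj hji) hj hi) _) (by simp), Set.indicator_of_mem hi]
    exact hys i hi
  · simp only [not_exists] at h
    simpa [Set.indicator_of_notMem (h _)] using hb

section QVariation

variable {Ω E F : Type*} [MeasurableSpace Ω] [NormedAddCommGroup E] [NormedSpace ℝ E]
  [NormedAddCommGroup F] [NormedSpace ℝ F] {P : Measure Ω} {m : Set Ω → (E →L[ℝ] F)}
  {p : ℝ≥0∞} {A : Set Ω}

theorem exists_varM_le_sum_enorm_apply_add {B : Set Ω} (hB : varM m B ≠ ∞) {δ : ℝ≥0∞}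
    (hδ : δ ≠ 0) :
    ∃ (n : ℕ) (Bs : Fin n → Set Ω) (xs : Fin n → E), (∀ i, MeasurableSet (Bs i)) ∧
      Pairwise (Function.onFun Disjoint Bs) ∧ (∀ i, Bs i ⊆ B) ∧ (∀ i, ‖xs i‖ ≤ 1) ∧
      varM m B ≤ ∑ i, ‖m (Bs i) (xs i)‖ₑ + δ := by
  rcases eq_or_ne (varM m B) 0 with h0 | h0
  · exact ⟨0, finZeroElim, finZeroElim, finZeroElim, fun i => i.elim0, finZeroElim,
      finZeroElim, by simp [h0]⟩
  have hlt : varM m B - δ < varM m B := ENNReal.sub_lt_self hB h0 hδ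
  conv_rhs at hlt => rw [varM]
  simp only [lt_iSup_iff] at hlt
  obtain ⟨n, Bs, hmeas, hdisj, hsub, hlt⟩ := hlt
  obtain ⟨xs, hxs, hlt⟩ := exists_lt_sum_enorm_apply (fun i => m (Bs i)) hlt
  exact ⟨n, Bs, xs, hmeas, hdisj, hsub, hxs, tsub_le_iff_right.1 hlt.le⟩

theorem sum_enorm_apply_le_qVar {ι : Type*} [Fintype ι] {Cs : ι → Set Ω} {ys : ι → E}
    (hmeas : ∀ i, MeasurableSet (Cs i)) (hdisj : Pairwise (Function.onFun Disjoint Cs))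
    (hsub : ∀ i, Cs i ⊆ A)
    (hg : eLpNorm (fun ω => ∑ i, (Cs i).indicator (fun _ => ys i) ω) p P ≤ 1) :
    ∑ i, ‖m (Cs i) (ys i)‖ₑ ≤ qVar P m p A := by
  let e := (Fintype.equivFin ι).symm
  have hg' : eLpNorm (fun ω => ∑ k, (Cs (e k)).indicator (fun _ => ys (e k)) ω) p P ≤ 1 := by
    convert hg using 3 with ω
    exact e.sum_comp (fun i => (Cs i).indicator (fun _ => ys i) ω)
  rw [← e.sum_comp]
  exact le_iSup_of_le (Fintype.card ι) <| le_iSup_of_le (Cs ∘ e) <| le_iSup_of_le (ys ∘ e) <|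
    le_iSup_of_le (fun k => hmeas (e k)) <|
    le_iSup_of_le (fun k l hkl => hdisj (e.injective.ne hkl)) <|
    le_iSup_of_le (fun k => hsub (e k)) <| le_iSup_of_le hg' le_rfl

theorem sum_enorm_apply_le_mul_qVar {ι : Type*} [Fintype ι] {Cs : ι → Set Ω} {ys : ι → E}
    (hmeas : ∀ i, MeasurableSet (Cs i)) (hdisj : Pairwise (Function.onFun Disjoint Cs))
    (hsub : ∀ i, Cs i ⊆ A) {t : NNReal} (ht : t ≠ 0)
    (hg : eLpNorm (fun ω => ∑ i, (Cs i).indicator (fun _ => ys i) ω) p P ≤ t) :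
    ∑ i, ‖m (Cs i) (ys i)‖ₑ ≤ t * qVar P m p A := by
  have hinv : ‖(t⁻¹ : ℝ)‖ₑ = (t : ℝ≥0∞)⁻¹ := by
    rw [← NNReal.coe_inv, NNReal.enorm_eq, ENNReal.coe_inv ht]
  have hscaled : eLpNorm (fun ω => ∑ i, (Cs i).indicator (fun _ => (t⁻¹ : ℝ) • ys i) ω) p P
      ≤ 1 := by
    simp_rw [Set.indicator_const_smul_apply, ← Finset.smul_sum]
    rw [show (fun ω => (t⁻¹ : ℝ) • ∑ i, (Cs i).indicator (fun _ => ys i) ω)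
      = (t⁻¹ : ℝ) • fun ω => ∑ i, (Cs i).indicator (fun _ => ys i) ω from rfl, eLpNorm_const_smul,
      hinv, ENNReal.inv_mul_le_iff (coe_ne_zero.2 ht) coe_ne_top, mul_one]
    exact hg
  have key := sum_enorm_apply_le_qVar (m := m) hmeas hdisj hsub hscaled
  simp_rw [map_smul, enorm_smul, ← Finset.mul_sum, hinv] at key
  rwa [ENNReal.inv_mul_le_iff (coe_ne_zero.2 ht) coe_ne_top] at key

theorem sum_enorm_mul_sum_enorm_apply_le_mul_qVar {f : Ω → E} (s : Finset E) {n : E → ℕ}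
    {Bs : (x : E) → Fin (n x) → Set Ω} {xs : (x : E) → Fin (n x) → E}
    (hmeas : ∀ x i, MeasurableSet (Bs x i))
    (hdisj : ∀ x, Pairwise (Function.onFun Disjoint (Bs x)))
    (hsub : ∀ x i, Bs x i ⊆ f ⁻¹' {x} ∩ A) (hxs : ∀ x i, ‖xs x i‖ ≤ 1)
    {t : NNReal} (ht : t ≠ 0) (hf : eLpNorm f p P ≤ t) :
    ∑ x ∈ s, ‖x‖ₑ * ∑ i, ‖m (Bs x i) (xs x i)‖ₑ ≤ t * qVar P m p A := by
  let Cs : (Σ x : s, Fin (n x)) → Set Ω := fun j => Bs j.1 j.2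
  let ys : (Σ x : s, Fin (n x)) → E := fun j => ‖(j.1 : E)‖ • xs j.1 j.2
  have hCs : Pairwise (Function.onFun Disjoint Cs) := by
    rintro ⟨x, i⟩ ⟨y, j⟩ hne
    by_cases hxy : x = y
    · subst hxy
      exact hdisj x fun hij : i = j => hne (by rw [hij])
    · refine Disjoint.mono ((hsub x i).trans Set.inter_subset_left)
        ((hsub y j).trans Set.inter_subset_left) ?_
      exact (Set.disjoint_singleton.2 (Subtype.val_injective.ne hxy)).preimage f
  -- on `Bs x i` we have `f = x`, so the step function is dominated by `‖f‖`
  have hg : eLpNorm (fun ω => ∑ j, (Cs j).indicator (fun _ => ys j) ω) p P ≤ t := by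
    refine le_trans (eLpNorm_mono fun ω => norm_sum_indicator_le_of_pairwise_disjoint hCs ys
      (norm_nonneg (f ω)) ?_) hf
    rintro ⟨x, i⟩ hω
    rw [(hsub x i hω).1, norm_smul, norm_norm]
    exact mul_le_of_le_one_right (norm_nonneg _) (hxs x i)
  have key := sum_enorm_apply_le_mul_qVar (m := m) (fun j => hmeas _ _) hCs
    (fun j => (hsub _ _).trans Set.inter_subset_right) ht hg
  simp only [ys, map_smul, enorm_smul, enorm_norm, Fintype.sum_sigma, ← Finset.mul_sum]
    at key
  rwa [Finset.sum_coe_sort s (fun x => ‖x‖ₑ * ∑ i, ‖m (Bs x i) (xs x i)‖ₑ)] at key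

theorem SimpleFunc.lintegral_enorm_le_eLpNorm_mul_qVar [IsFiniteMeasure P] (hp : p ≠ 0)
    (hA : MeasurableSet A) {ν : Measure Ω} [IsFiniteMeasure ν]
    (hν : ∀ B, MeasurableSet B → ν B = varM m B) (hac : ν ≪ P)
    (S : SimpleFunc Ω E) (hS : ∀ ω ∉ A, S ω = 0) :
    ∫⁻ ω, ‖S ω‖ₑ ∂ν ≤ eLpNorm S p P * qVar P m p A := by
  rcases eq_or_ne (eLpNorm S p P) 0 with hS0 | hS0
  · have : ⇑S =ᵐ[ν] 0 := hac.ae_le ((eLpNorm_eq_zero_iff S.aestronglyMeasurable hp).1 hS0)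
    rw [lintegral_congr_ae (g := 0) (by filter_upwards [this] with ω hω; simp [hω])]
    simp
  lift eLpNorm S p P to NNReal using (S.memLp_of_isFiniteMeasure p P).eLpNorm_lt_top.ne
    with t ht
  have hI : ∫⁻ ω, ‖S ω‖ₑ ∂ν = ∑ x ∈ S.range, ‖x‖ₑ * varM m (S ⁻¹' {x} ∩ A) := by
    calc ∫⁻ ω, ‖S ω‖ₑ ∂ν = ∫⁻ ω in A, S.map (‖·‖ₑ) ω ∂ν :=
          (setLIntegral_eq_of_support_subset fun ω hω =>
            by_contra fun hωA => hω (by simp [hS ω hωA])).symm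
      _ = _ := by
          rw [SimpleFunc.lintegral_eq_lintegral, SimpleFunc.map_lintegral]
          refine Finset.sum_congr rfl fun x _ => ?_
          rw [Measure.restrict_apply (S.measurableSet_fiber x),
            hν _ ((S.measurableSet_fiber x).inter hA)]
  rw [hI]
  refine ENNReal.le_of_forall_pos_le_add fun ε hε _ => ?_
  set K := ∑ x ∈ S.range, ‖x‖ₑ
  have hδ : (ε : ℝ≥0∞) / K ≠ 0 :=
    ENNReal.div_ne_zero.2 ⟨coe_ne_zero.2 hε.ne', ENNReal.sum_ne_top.2 fun x _ => enorm_ne_top⟩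
  choose n Bs xs hmeas hdisj hsub hxs hle using fun x : E =>
    exists_varM_le_sum_enorm_apply_add (m := m) (B := S ⁻¹' {x} ∩ A)
      (hν _ ((S.measurableSet_fiber x).inter hA) ▸ measure_ne_top ν _) hδ
  calc ∑ x ∈ S.range, ‖x‖ₑ * varM m (S ⁻¹' {x} ∩ A)
      ≤ ∑ x ∈ S.range, (‖x‖ₑ * ∑ i, ‖m (Bs x i) (xs x i)‖ₑ + ‖x‖ₑ * (ε / K)) :=
        Finset.sum_le_sum fun x _ => by rw [← mul_add]; gcongr; exact hle x
    _ = ∑ x ∈ S.range, ‖x‖ₑ * ∑ i, ‖m (Bs x i) (xs x i)‖ₑ + K * (ε / K) := by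
        rw [Finset.sum_add_distrib, Finset.sum_mul]
    _ ≤ t * qVar P m p A + ε :=
        add_le_add (sum_enorm_mul_sum_enorm_apply_le_mul_qVar _ hmeas hdisj hsub hxs
          (by rintro rfl; simp at hS0) ht.symm.le) ENNReal.mul_div_le

theorem lintegral_enorm_le_eLpNorm_mul_qVar [IsFiniteMeasure P]
    [TopologicalSpace.SeparableSpace E] [MeasurableSpace E] [BorelSpace E] (hp : 1 ≤ p)
    (hp' : p ≠ ∞) (hA : MeasurableSet A) (hfin : qVar P m p A ≠ ∞) {ν : Measure Ω}
    [IsFiniteMeasure ν] (hν : ∀ B, MeasurableSet B → ν B = varM m B) (hac : ν ≪ P) {Y : Ω → E}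
    (hYmeas : Measurable Y) (hY : MemLp Y p P) (hYA : ∀ ω ∉ A, Y ω = 0) :
    ∫⁻ ω, ‖Y ω‖ₑ ∂ν ≤ eLpNorm Y p P * qVar P m p A := by
  set G : ℕ → SimpleFunc Ω E := fun n =>
    SimpleFunc.approxOn Y hYmeas Set.univ 0 (Set.mem_univ 0) n
  have hGA : ∀ n, ∀ ω ∉ A, G n ω = 0 := fun n ω hω => by
    simpa [hYA ω hω] using SimpleFunc.norm_approxOn_zero_le hYmeas (Set.mem_univ 0) ω n
  have hGY : ∀ ω, Tendsto (fun n => G n ω) atTop (nhds (Y ω)) := fun ω =>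
    SimpleFunc.tendsto_approxOn hYmeas (Set.mem_univ 0) (by simp)
  have hGY_Lp : Tendsto (fun n => eLpNorm (⇑(G n) - Y) p P) atTop (nhds 0) :=
    SimpleFunc.tendsto_approxOn_Lp_eLpNorm hYmeas (Set.mem_univ 0) hp' (by simp)
      (by simpa using hY.eLpNorm_lt_top)
  have hG_le : ∀ n, eLpNorm (G n) p P ≤ eLpNorm Y p P + eLpNorm (⇑(G n) - Y) p P := fun n => by
    simpa using eLpNorm_add_le hY.1 ((G n).aestronglyMeasurable.sub hY.1) hp
  calc ∫⁻ ω, ‖Y ω‖ₑ ∂ν = ∫⁻ ω, liminf (fun n => ‖G n ω‖ₑ) atTop ∂ν :=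
        lintegral_congr fun ω => (hGY ω).enorm.liminf_eq.symm
    _ ≤ liminf (fun n => ∫⁻ ω, ‖G n ω‖ₑ ∂ν) atTop :=
        lintegral_liminf_le fun n => (G n).measurable.enorm
    _ ≤ liminf (fun n => (eLpNorm Y p P + eLpNorm (⇑(G n) - Y) p P) * qVar P m p A) atTop :=
        liminf_le_liminf <| Eventually.of_forall fun n =>
          (SimpleFunc.lintegral_enorm_le_eLpNorm_mul_qVar (zero_lt_one.trans_le hp).ne' hA hν
            hac (G n) (hGA n)).trans (by gcongr; exact hG_le n)
    _ = eLpNorm Y p P * qVar P m p A := by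
        simpa using (ENNReal.Tendsto.mul_const (tendsto_const_nhds.add hGY_Lp)
          (Or.inr hfin)).liminf_eq

end QVariation

theorem tendsto_lintegral_enorm_sub_prod {α E ι : Type*} [MeasurableSpace α]
    [NormedAddCommGroup E] {μ : Measure α} {l : Filter ι} {f : ι → α → E} {g : α → E}
    (hf : ∀ i, AEStronglyMeasurable (f i) μ) (hg : AEStronglyMeasurable g μ)
    (h : Tendsto (fun i => ∫⁻ x, ‖f i x - g x‖ₑ ∂μ) l (nhds 0)) :
    Tendsto (fun ij : ι × ι => ∫⁻ x, ‖f ij.1 x - f ij.2 x‖ₑ ∂μ) (l ×ˢ l) (nhds 0) := by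
  have hsum : Tendsto (fun ij : ι × ι =>
      ∫⁻ x, ‖f ij.1 x - g x‖ₑ ∂μ + ∫⁻ x, ‖f ij.2 x - g x‖ₑ ∂μ) (l ×ˢ l) (nhds 0) := by
    simpa using (h.comp tendsto_fst).add (h.comp tendsto_snd)
  refine tendsto_of_tendsto_of_tendsto_of_le_of_le tendsto_const_nhds hsum (fun _ => zero_le)
    fun ij => ?_
  calc ∫⁻ x, ‖f ij.1 x - f ij.2 x‖ₑ ∂μ ≤ ∫⁻ x, ‖f ij.1 x - g x‖ₑ + ‖f ij.2 x - g x‖ₑ ∂μ :=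
        lintegral_mono fun x => by
          simpa only [edist_eq_enorm_sub] using edist_triangle_right (f ij.1 x) (f ij.2 x) (g x)
    _ = _ := lintegral_add_left' ((hf ij.1).sub hg).enorm _

theorem enorm_setToFun_le_lintegral {α E F : Type*} [MeasurableSpace α] [NormedAddCommGroup E]
    [NormedSpace ℝ E] [NormedAddCommGroup F] [NormedSpace ℝ F] {μ : Measure α}
    {T : Set α → E →L[ℝ] F} (hT : DominatedFinMeasAdditive μ T 1) (f : α → E) :
    ‖setToFun μ T hT f‖ₑ ≤ ∫⁻ a, ‖f a‖ₑ ∂μ := by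
  rw [← ofReal_norm]
  calc ENNReal.ofReal ‖setToFun μ T hT f‖
      ≤ ENNReal.ofReal (∫⁻ a, ‖f a‖ₑ ∂μ).toReal :=
        ENNReal.ofReal_le_ofReal (by simpa using norm_setToFun_le_toReal hT zero_le_one (f := f))
    _ ≤ _ := ENNReal.ofReal_toReal_le

theorem exists_simpleFunc_tendsto_setToFun {α E F : Type*} [MeasurableSpace α]
    [NormedAddCommGroup E] [NormedSpace ℝ E] [TopologicalSpace.SeparableSpace E]
    [MeasurableSpace E] [BorelSpace E] [NormedAddCommGroup F] [NormedSpace ℝ F] [CompleteSpace F]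
    {μ : Measure α} {T : Set α → E →L[ℝ] F} {C : ℝ} (hT : DominatedFinMeasAdditive μ T C)
    {f : α → E} (hf : Measurable f) (hfi : Integrable f μ) :
    ∃ fs : ℕ → SimpleFunc α E, (∀ x, Tendsto (fun n => fs n x) atTop (nhds (f x))) ∧
      Tendsto (fun jk : ℕ × ℕ => ∫⁻ x, ‖fs jk.1 x - fs jk.2 x‖ₑ ∂μ) atTop (nhds 0) ∧
      Tendsto (fun n => (fs n).setToSimpleFunc T) atTop (nhds (setToFun μ T hT f)) := by
  set fs : ℕ → SimpleFunc α E := fun n =>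
    SimpleFunc.approxOn f hf Set.univ 0 (Set.mem_univ 0) n
  have hfs : ∀ x, Tendsto (fun n => fs n x) atTop (nhds (f x)) := fun x =>
    SimpleFunc.tendsto_approxOn hf (Set.mem_univ 0) (by simp)
  have hfsi : ∀ n, Integrable (fs n) μ := fun n =>
    SimpleFunc.integrable_approxOn hf hfi (Set.mem_univ 0) (integrable_zero _ _ _) n
  have hL1 : Tendsto (fun n => ∫⁻ x, ‖fs n x - f x‖ₑ ∂μ) atTop (nhds 0) :=
    SimpleFunc.tendsto_approxOn_L1_enorm hf _ (by simp) (by simpa using hfi.2)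
  clear_value fs
  refine ⟨fs, hfs, ?_, ?_⟩
  · rw [← prod_atTop_atTop_eq]
    exact tendsto_lintegral_enorm_sub_prod (f := fun n => ⇑(fs n))
      (fun n => (fs n).aestronglyMeasurable) hf.aestronglyMeasurable hL1
  · simp_rw [← setToFun_simpleFunc_eq_setToSimpleFunc hT _ (hfsi _)]
    exact tendsto_setToFun_of_L1 hT f hf.aestronglyMeasurable (.of_forall hfsi) hL1

theorem stmt7_general {Ω E F : Type*} [MeasurableSpace Ω] (P : Measure Ω) [IsProbabilityMeasure P]
    [NormedAddCommGroup E] [NormedSpace ℝ E] [TopologicalSpace.SeparableSpace E]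
    [MeasurableSpace E] [BorelSpace E]
    [NormedAddCommGroup F] [NormedSpace ℝ F] [CompleteSpace F]
    (p : ℝ≥0∞) (hp : 1 ≤ p) (hp' : p ≠ ∞)
    (m : Set Ω → (E →L[ℝ] F)) (hca : CountablyAdditiveM m)
    (hfinvar : ∀ B : Set Ω, MeasurableSet B → varM m B < ∞)
    (ν : Measure Ω) (hν : ∀ B : Set Ω, MeasurableSet B → ν B = varM m B)
    (hac : ν ≪ P)
    (A : Set Ω) (hA : MeasurableSet A) (hfin : qVar P m p A < ∞)
    (Y : Ω → E) (hYmeas : Measurable Y) (hY : MemLp Y p P)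
    (hsupp : ∀ᵐ ω ∂P, ω ∉ A → Y ω = 0) :
    ∃ (Yn : ℕ → SimpleFunc Ω E) (z : F),
      (∀ᵐ ω ∂ν, Tendsto (fun n => Yn n ω) atTop (nhds (Y ω))) ∧
      Tendsto (fun jk : ℕ × ℕ =>
          ∫⁻ ω, (‖Yn jk.1 ω - Yn jk.2 ω‖₊ : ℝ≥0∞) ∂ν) atTop (nhds 0) ∧
      Tendsto (fun n => simpleIntegral m (Yn n)) atTop (nhds z) ∧
      (‖z‖₊ : ℝ≥0∞) ≤ ∫⁻ ω, (‖Y ω‖₊ : ℝ≥0∞) ∂ν ∧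
      ∫⁻ ω, (‖Y ω‖₊ : ℝ≥0∞) ∂ν ≤ eLpNorm Y p P * qVar P m p A := by
  have : IsFiniteMeasure ν := ⟨hν _ .univ ▸ hfinvar _ .univ⟩
  -- `qVar` only sees sets inside `A`, so we work with a version of `Y` vanishing off `A`
  set Y' := A.indicator Y
  have hY'P : Y' =ᵐ[P] Y := by
    filter_upwards [hsupp] with ω h
    by_cases hω : ω ∈ A <;> simp [Y', hω, h]
  have hY'ν : Y' =ᵐ[ν] Y := hac.ae_le hY'P
  have hY'meas : Measurable Y' := hYmeas.indicator hA
  have hbound : ∫⁻ ω, ‖Y' ω‖ₑ ∂ν ≤ eLpNorm Y' p P * qVar P m p A :=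
    lintegral_enorm_le_eLpNorm_mul_qVar hp hp' hA hfin.ne hν hac hY'meas
      (hY.ae_eq hY'P.symm) fun ω hω => Set.indicator_of_notMem hω _
  have hY'int : Integrable Y' ν := ⟨hY'meas.aestronglyMeasurable,
    hbound.trans_lt (mul_lt_top (hY.ae_eq hY'P.symm).eLpNorm_lt_top hfin)⟩
  have hlint : ∫⁻ ω, ‖Y' ω‖ₑ ∂ν = ∫⁻ ω, ‖Y ω‖ₑ ∂ν :=
    lintegral_congr_ae (by filter_upwards [hY'ν] with ω h; rw [h])
  rw [hlint, eLpNorm_congr_ae hY'P] at hbound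
  let hT := dominatedFinMeasAdditive_of_varM hca hν
  obtain ⟨Yn, hYn, hCauchy, hlim⟩ := exists_simpleFunc_tendsto_setToFun hT hY'meas hY'int
  refine ⟨Yn, setToFun ν m hT Y', ?_, hCauchy, hlim,
    (enorm_setToFun_le_lintegral hT Y').trans hlint.le, hbound⟩
  filter_upwards [hY'ν] with ω hω
  exact hω ▸ hYn ω

/-- Every `Y ∈ L^p(Ω,E,ℙ)` supported in `A` is `m`-integrable (there is a sequence of
simple functions converging `|m|`-a.e. to `Y` which is Cauchy in `L¹(|m|)` and whose
integrals against `m` converge), and the resulting integral `z = ∫ Y dm` satisfies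
`‖z‖ ≤ ∫ ‖Y‖ d|m| ≤ ‖Y‖_{L^p} · m̄_q(A)`. -/
theorem stmt7 {Ω E F : Type*} [MeasurableSpace Ω] (P : Measure Ω) [IsProbabilityMeasure P]
    [NormedAddCommGroup E] [NormedSpace ℝ E] [TopologicalSpace.SeparableSpace E]
    [MeasurableSpace E] [BorelSpace E]
    [NormedAddCommGroup F] [NormedSpace ℝ F] [CompleteSpace F]
    (p q : ℝ≥0∞) (hp : 1 ≤ p) (hp' : p ≠ ∞) (hpq : 1 / p + 1 / q = 1)
    (m : Set Ω → (E →L[ℝ] F)) (hca : CountablyAdditiveM m)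
    (hfinvar : ∀ B : Set Ω, MeasurableSet B → varM m B < ∞)
    (ν : Measure Ω) (hν : ∀ B : Set Ω, MeasurableSet B → ν B = varM m B)
    (hac : ν ≪ P)
    (A : Set Ω) (hA : MeasurableSet A) (hfin : qVar P m p A < ∞)
    (Y : Ω → E) (hYmeas : Measurable Y) (hY : MemLp Y p P)
    (hsupp : ∀ᵐ ω ∂P, ω ∉ A → Y ω = 0) :
    ∃ (Yn : ℕ → SimpleFunc Ω E) (z : F),
      (∀ᵐ ω ∂ν, Tendsto (fun n => Yn n ω) atTop (nhds (Y ω))) ∧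
      Tendsto (fun jk : ℕ × ℕ =>
          ∫⁻ ω, (‖Yn jk.1 ω - Yn jk.2 ω‖₊ : ℝ≥0∞) ∂ν) atTop (nhds 0) ∧
      Tendsto (fun n => simpleIntegral m (Yn n)) atTop (nhds z) ∧
      (‖z‖₊ : ℝ≥0∞) ≤ ∫⁻ ω, (‖Y ω‖₊ : ℝ≥0∞) ∂ν ∧
      ∫⁻ ω, (‖Y ω‖₊ : ℝ≥0∞) ∂ν ≤ eLpNorm Y p P * qVar P m p A :=
  stmt7_general P p hp hp' m hca hfinvar ν hν hac A hA hfin Y hYmeas hY hsupp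
end
end

section
/- Let g ∈ L^q(Ω, ℙ) (1 < q < ∞) and A ∈ F with ℙ(A) > 0. If E[1_{A_1} g] = E[1_{A_2} g] for all measurable A_1, A_2 ⊆ A with ℙ(A_1) = ℙ(A_2), and (Ω,F,ℙ) is atomless, then g is ℙ-almost surely constant on A. -/
/-!
If `g` were not a.e. constant on `A`, then, since countably many half-lines `Iic c` separate the
reals, some level `c` would cut `A` into two parts `{g ≤ c}` and `{c < g}` of positive measure.
By Sierpiński's theorem an atomless finite measure takes every intermediate value on measurable
subsets, so both parts contain subsets of one common positive measure `t`; the integrals of `g`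
over them are `≤ c t` and `> c t`, contradicting the hypothesis.
-/

open MeasureTheory Filter Set Topology

-- Greedy exhaustion: each step goes at least halfway to the supremum of `m` above the current point.
theorem exists_monotone_seq_halfway {α : Type*} [Preorder α] [Nonempty α] (m : α → ℝ)
    (hm : BddAbove (range m)) :
    ∃ a : ℕ → α, Monotone a ∧ ∀ n b, a n ≤ b → m b + m (a n) ≤ 2 * m (a (n + 1)) := by
  have step : ∀ x : α, ∃ y, x ≤ y ∧ ∀ b, x ≤ b → m b + m x ≤ 2 * m y := by
    intro x
    set σ := sSup (m '' Ici x)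
    have hbdd : BddAbove (m '' Ici x) := hm.mono (image_subset_range _ _)
    have hle : ∀ b, x ≤ b → m b ≤ σ := fun b hb => le_csSup hbdd ⟨b, hb, rfl⟩
    rcases (hle x le_rfl).lt_or_eq with hlt | heq
    · obtain ⟨_, ⟨y, hxy, rfl⟩, hy⟩ := exists_lt_of_lt_csSup
        (⟨m x, x, le_rfl, rfl⟩ : (m '' Ici x).Nonempty) (by linarith : (σ + m x) / 2 < σ)
      exact ⟨y, hxy, fun b hb => by linarith [hle b hb]⟩
    · exact ⟨x, le_rfl, fun b hb => by linarith [hle b hb]⟩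
  choose next hle_next hnext using step
  let a : ℕ → α := fun n => next^[n] (Classical.arbitrary α)
  have ha : ∀ n, a (n + 1) = next (a n) := fun n => Function.iterate_succ_apply' next n _
  refine ⟨a, monotone_nat_of_le_succ fun n => ?_, fun n => ?_⟩
  · rw [ha]; exact hle_next _
  · rw [ha]; exact hnext _

/-- Unlike `MeasureTheory.NoAtoms`, which only asks singletons to be null, this says that no
measurable set of positive measure is an atom of the measure algebra. -/
def NoMeasurableAtoms {Ω : Type*} [MeasurableSpace Ω] (μ : Measure Ω) : Prop :=
  ∀ A : Set Ω, MeasurableSet A → 0 < μ A →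
    ∃ B : Set Ω, MeasurableSet B ∧ B ⊆ A ∧ 0 < μ B ∧ μ B < μ A

def SetIntegralDependsOnlyOnMeasure {Ω : Type*} [MeasurableSpace Ω] (μ : Measure Ω)
    (g : Ω → ℝ) (A : Set Ω) : Prop :=
  ∀ A₁ A₂ : Set Ω, MeasurableSet A₁ → MeasurableSet A₂ → A₁ ⊆ A → A₂ ⊆ A → μ A₁ = μ A₂ →
    ∫ ω in A₁, g ω ∂μ = ∫ ω in A₂, g ω ∂μ

namespace NoMeasurableAtoms

variable {Ω : Type*} [MeasurableSpace Ω] {μ : Measure Ω} [IsFiniteMeasure μ] {S A : Set Ω}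
  {g : Ω → ℝ}

theorem exists_subset_measureReal_le_half (h : NoMeasurableAtoms μ) (hS : MeasurableSet S)
    (hpos : 0 < μ.real S) : ∃ B ⊆ S, MeasurableSet B ∧ 0 < μ.real B ∧ μ.real B ≤ μ.real S / 2 := by
  obtain ⟨B, hB, hBS, hB0, hBlt⟩ := h S hS (ENNReal.toReal_pos_iff.1 hpos).1
  have hB0' : 0 < μ.real B := ENNReal.toReal_pos hB0.ne' (measure_ne_top μ B)
  have hBlt' : μ.real B < μ.real S := ENNReal.toReal_strict_mono (measure_ne_top μ S) hBlt
  have hsum : μ.real B + μ.real (S \ B) = μ.real S := by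
    simpa only [inter_eq_right.2 hBS] using measureReal_inter_add_sdiff (μ := μ) (s := S) hB
  by_cases hle : μ.real B ≤ μ.real S / 2
  · exact ⟨B, hBS, hB, hB0', hle⟩
  · exact ⟨S \ B, sdiff_subset, hS.diff hB, by linarith, by linarith⟩

theorem exists_subset_measureReal_lt (h : NoMeasurableAtoms μ) (hS : MeasurableSet S)
    (hpos : 0 < μ.real S) {ε : ℝ} (hε : 0 < ε) :
    ∃ B ⊆ S, MeasurableSet B ∧ 0 < μ.real B ∧ μ.real B < ε := by
  have halving : ∀ n : ℕ, ∃ B ⊆ S, MeasurableSet B ∧ 0 < μ.real B ∧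
      μ.real B ≤ μ.real S * (1 / 2) ^ n := by
    intro n
    induction n with
    | zero => exact ⟨S, subset_rfl, hS, hpos, by simp⟩
    | succ n ih =>
      obtain ⟨B, hBS, hB, hB0, hBle⟩ := ih
      obtain ⟨C, hCB, hC, hC0, hCle⟩ := h.exists_subset_measureReal_le_half hB hB0
      refine ⟨C, hCB.trans hBS, hC, hC0, hCle.trans ?_⟩
      rw [pow_succ, ← mul_assoc]
      linarith
  obtain ⟨n, hn⟩ := exists_pow_lt_of_lt_one (div_pos hε hpos) one_half_lt_one
  obtain ⟨B, hBS, hB, hB0, hBle⟩ := halving n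
  refine ⟨B, hBS, hB, hB0, hBle.trans_lt ?_⟩
  rwa [← lt_div_iff₀' hpos]

theorem exists_subset_measureReal_eq (h : NoMeasurableAtoms μ) (hS : MeasurableSet S) {r : ℝ}
    (hr₀ : 0 ≤ r) (hr : r ≤ μ.real S) : ∃ T ⊆ S, MeasurableSet T ∧ μ.real T = r := by
  let 𝒞 := {T : Set Ω // T ⊆ S ∧ MeasurableSet T ∧ μ.real T ≤ r}
  have : Nonempty 𝒞 := ⟨⟨∅, empty_subset S, .empty, by simpa using hr₀⟩⟩
  obtain ⟨a, ha_mono, ha⟩ := exists_monotone_seq_halfway (fun T : 𝒞 => μ.real T.1)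
    ⟨r, by rintro _ ⟨T, rfl⟩; exact T.2.2.2⟩
  set T := ⋃ n, (a n).1
  have haT : ∀ n, (a n).1 ⊆ T := fun n => subset_iUnion (fun k => (a k).1) n
  have hTS : T ⊆ S := iUnion_subset fun n => (a n).2.1
  have hT : MeasurableSet T := .iUnion fun n => (a n).2.2.1
  have hlim : Tendsto (fun n => μ.real (a n).1) atTop (𝓝 (μ.real T)) :=
    (ENNReal.tendsto_toReal (measure_ne_top μ T)).comp
      (tendsto_measure_iUnion_atTop fun _ _ hmn => ha_mono hmn)
  have hTr : μ.real T ≤ r := le_of_tendsto' hlim fun n => (a n).2.2.2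
  refine ⟨T, hTS, hT, hTr.antisymm (not_lt.1 fun hlt => ?_)⟩
  have hST : 0 < μ.real (S \ T) := by
    have := measureReal_inter_add_sdiff (μ := μ) (s := S) hT
    rw [inter_eq_right.2 hTS] at this
    linarith
  obtain ⟨U, hUST, hU, hU0, hUr⟩ := h.exists_subset_measureReal_lt (hS.diff hT) hST (sub_pos.2 hlt)
  -- every `a n` could still absorb `U`, so each step gains at least `μ U / 2`
  have hgain : ∀ n, 2 * μ.real (a n).1 + μ.real U ≤ 2 * μ.real T := by
    intro n
    have hdisj : Disjoint (a n).1 U :=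
      disjoint_of_subset_left (haT n) (disjoint_sdiff_right.mono_right hUST)
    have hunion : μ.real ((a n).1 ∪ U) = μ.real (a n).1 + μ.real U := measureReal_union hdisj hU
    have hle : μ.real (a n).1 ≤ μ.real T := measureReal_mono (haT n)
    have := ha n ⟨(a n).1 ∪ U, union_subset (a n).2.1 (hUST.trans sdiff_subset),
      (a n).2.2.1.union hU, by linarith⟩ subset_union_left
    have hle' : μ.real (a (n + 1)).1 ≤ μ.real T := measureReal_mono (haT (n + 1))
    simp only [hunion] at this
    linarith
  have := le_of_tendsto' ((hlim.const_mul 2).add_const (μ.real U)) hgain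
  linarith

theorem ae_restrict_le_or_ae_restrict_gt (h : NoMeasurableAtoms μ) (hA : MeasurableSet A)
    (hgm : Measurable g) (hg : IntegrableOn g A μ) (hconst : SetIntegralDependsOnlyOnMeasure μ g A)
    (c : ℝ) : (∀ᵐ ω ∂μ.restrict A, g ω ≤ c) ∨ ∀ᵐ ω ∂μ.restrict A, c < g ω := by
  set L := {ω | g ω ≤ c} ∩ A
  set U := {ω | c < g ω} ∩ A
  have hLm : MeasurableSet L := (measurableSet_le hgm measurable_const).inter hA
  have hUm : MeasurableSet U := (measurableSet_lt measurable_const hgm).inter hA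
  by_contra! ⟨hU, hL⟩
  rw [frequently_ae_iff, Measure.restrict_apply' hA] at hU hL
  replace hL : 0 < μ.real L := ENNReal.toReal_pos hL (measure_ne_top μ _)
  replace hU : 0 < μ.real U := ENNReal.toReal_pos hU (measure_ne_top μ _)
  set t := min (μ.real L) (μ.real U)
  have ht : 0 < t := lt_min hL hU
  obtain ⟨C₁, hC₁L, hC₁, hC₁t⟩ := h.exists_subset_measureReal_eq hLm ht.le (min_le_left _ _)
  obtain ⟨C₂, hC₂U, hC₂, hC₂t⟩ := h.exists_subset_measureReal_eq hUm ht.le (min_le_right _ _)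
  have heq := hconst C₁ C₂ hC₁ hC₂ (hC₁L.trans inter_subset_right) (hC₂U.trans inter_subset_right)
    ((measureReal_eq_measureReal_iff).1 (hC₁t.trans hC₂t.symm))
  have hle : ∫ ω in C₁, g ω ∂μ ≤ t * c := by
    calc ∫ ω in C₁, g ω ∂μ ≤ ∫ _ in C₁, c ∂μ :=
          setIntegral_mono_on (hg.mono_set (hC₁L.trans inter_subset_right))
            (integrableOn_const (measure_ne_top μ _)) hC₁ fun ω hω => (hC₁L hω).1
      _ = t * c := by rw [setIntegral_const, hC₁t, smul_eq_mul]
  have hgt : t * c < ∫ ω in C₂, g ω ∂μ := by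
    have hgC₂ : IntegrableOn g C₂ μ := hg.mono_set (hC₂U.trans inter_subset_right)
    have hpos : 0 < ∫ ω in C₂, (g ω - c) ∂μ := by
      rw [setIntegral_pos_iff_support_of_nonneg_ae
        (ae_restrict_of_forall_mem hC₂ fun ω hω => sub_nonneg.2 (hC₂U hω).1.le)
        (hgC₂.sub (integrableOn_const (measure_ne_top μ _))),
        inter_eq_right.2 fun ω hω => Function.mem_support.2 (sub_ne_zero.2 (hC₂U hω).1.ne')]
      exact (ENNReal.toReal_pos_iff.1 (hC₂t.symm ▸ ht : 0 < μ.real C₂)).1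
    rwa [integral_sub hgC₂ (integrableOn_const (measure_ne_top μ _)), setIntegral_const, hC₂t,
      smul_eq_mul, sub_pos] at hpos
  linarith

theorem ae_eq_const_of_setIntegralDependsOnlyOnMeasure (h : NoMeasurableAtoms μ)
    (hA : MeasurableSet A) (hg : IntegrableOn g A μ)
    (hconst : SetIntegralDependsOnlyOnMeasure μ g A) : ∃ c, ∀ᵐ ω ∂μ, ω ∈ A → g ω = c := by
  set g' := hg.aestronglyMeasurable.mk g
  have hgg' : g =ᵐ[μ.restrict A] g' := hg.aestronglyMeasurable.ae_eq_mk
  have hconst' : SetIntegralDependsOnlyOnMeasure μ g' A := by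
    intro A₁ A₂ hA₁ hA₂ hA₁A hA₂A hμ
    rw [← integral_congr_ae (ae_restrict_of_ae_restrict_of_subset hA₁A hgg'),
      ← integral_congr_ae (ae_restrict_of_ae_restrict_of_subset hA₂A hgg')]
    exact hconst A₁ A₂ hA₁ hA₂ hA₁A hA₂A hμ
  obtain ⟨c, hc⟩ := exists_eventuallyEq_const_of_forall_separating (· ∈ range Iic) (f := g')
    (l := ae (μ.restrict A)) <| forall_mem_range.2 fun c =>
      (h.ae_restrict_le_or_ae_restrict_gt hA hg.aestronglyMeasurable.stronglyMeasurable_mk.measurable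
        (hg.congr hgg') hconst' c).imp id fun hgt => hgt.mono fun _ => not_le.2
  exact ⟨c, (ae_restrict_iff' hA).1 (hgg'.trans hc)⟩

end NoMeasurableAtoms

theorem stmt11_general {Ω : Type*} [MeasurableSpace Ω] (P : Measure Ω) [IsProbabilityMeasure P]
    (hatomless : ∀ A : Set Ω, MeasurableSet A → 0 < P A →
      ∃ B : Set Ω, MeasurableSet B ∧ B ⊆ A ∧ 0 < P B ∧ P B < P A)
    (q : ℝ) (hq : 1 < q)
    (g : Ω → ℝ) (hg : MemLp g (ENNReal.ofReal q) P)
    (A : Set Ω) (hA : MeasurableSet A)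
    (hconst : ∀ A₁ A₂ : Set Ω, MeasurableSet A₁ → MeasurableSet A₂ →
      A₁ ⊆ A → A₂ ⊆ A → P A₁ = P A₂ →
      ∫ ω in A₁, g ω ∂P = ∫ ω in A₂, g ω ∂P) :
    ∃ c : ℝ, ∀ᵐ ω ∂P, ω ∈ A → g ω = c :=
  NoMeasurableAtoms.ae_eq_const_of_setIntegralDependsOnlyOnMeasure hatomless hA
    (hg.integrable (ENNReal.one_le_ofReal.2 hq.le)).integrableOn hconst

/-- If `g ∈ L^q` (`1 < q < ∞`) on an atomless probability space has equal integrals over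
all measurable subsets of `A` of equal probability, then `g` is a.s. constant on `A`. -/
theorem stmt11 {Ω : Type*} [MeasurableSpace Ω] (P : Measure Ω) [IsProbabilityMeasure P]
    (hatomless : ∀ A : Set Ω, MeasurableSet A → 0 < P A →
      ∃ B : Set Ω, MeasurableSet B ∧ B ⊆ A ∧ 0 < P B ∧ P B < P A)
    (q : ℝ) (hq : 1 < q)
    (g : Ω → ℝ) (hg : MemLp g (ENNReal.ofReal q) P)
    (A : Set Ω) (hA : MeasurableSet A) (hApos : 0 < P A)
    (hconst : ∀ A₁ A₂ : Set Ω, MeasurableSet A₁ → MeasurableSet A₂ →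
      A₁ ⊆ A → A₂ ⊆ A → P A₁ = P A₂ →
      ∫ ω in A₁, g ω ∂P = ∫ ω in A₂, g ω ∂P) :
    ∃ c : ℝ, ∀ᵐ ω ∂P, ω ∈ A → g ω = c :=
  stmt11_general P hatomless q hq g hg A hA hconst
end

section
/- Let H, U be separable Hilbert spaces and f : P_2(H) → U with Λ-continuously Fréchet differentiable lift f̂(X) = f(law(X)) on L^2(Ω,H). Suppose X_0 ∈ L^2(Ω,H) takes finitely many values x_1,…,x_N with probabilities p_k > 0. Then for all A ∈ F and u ∈ H: Df̂(X_0)(1_A u) = Σ_{k=1}^N ℙ(A | X_0 = x_k) · Df̂(X_0)(1_{{X_0 = x_k}} u); equivalently, the vector measure m(A) := Df̂(X_0)(1_A ·) satisfies m(A) = ∫ E[1_A | X_0] dm. -/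
/-!
On an atom `e = {X₀ = c}` the set function `m B = Df̂(X₀)(1_B u)` is finitely additive, and it
depends only on `ℙ B`: moving `X₀` in the direction `1_B u` turns the value `c` into `c + t u` on
`B`, which changes the law of `X₀` only through `ℙ B`, and `f̂` only sees laws. Hence
`ψ B = m B - ℙ B / ℙ e • m e` is a bounded, additive, law-invariant set function on `e` with
`ψ e = 0`. On an atomless space a set of at most half the measure of `e` has a disjoint copy of
the same measure inside `e` (Sierpiński), so doubling gives `sup ‖ψ‖ ≤ sup ‖ψ‖ / 2`, and `ψ = 0`.
Summing over the atoms gives the formula.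
-/

open MeasureTheory ENNReal Filter

noncomputable section

namespace MeasureTheory.Measure

variable {α : Type*} [MeasurableSpace α] {μ : Measure α}

-- Atomless in the measure-theoretic sense, which is stronger than Mathlib's `NoAtoms`
-- (null singletons).
def IsAtomless (μ : Measure α) : Prop :=
  ∀ A : Set α, MeasurableSet A → 0 < μ A →
    ∃ B : Set α, MeasurableSet B ∧ B ⊆ A ∧ 0 < μ B ∧ μ B < μ A

variable [IsFiniteMeasure μ]

theorem IsAtomless.exists_subset_measure_le_half (hμ : μ.IsAtomless) {A : Set α}
    (hA : MeasurableSet A) (hpos : 0 < μ A) :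
    ∃ B, MeasurableSet B ∧ B ⊆ A ∧ 0 < μ B ∧ μ B ≤ μ A / 2 := by
  obtain ⟨B, hB, hBA, hB0, hBA'⟩ := hμ A hA hpos
  have hcompl : μ (A \ B) = μ A - μ B :=
    measure_sdiff hBA hB.nullMeasurableSet (measure_ne_top μ B)
  rcases le_or_gt (μ B) (μ A / 2) with h | h
  · exact ⟨B, hB, hBA, hB0, h⟩
  · refine ⟨A \ B, hA.diff hB, Set.sdiff_subset, ?_, ?_⟩
    · rw [hcompl]
      exact tsub_pos_of_lt hBA'
    · rw [hcompl, ← ENNReal.sub_half (measure_ne_top μ A)]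
      exact tsub_le_tsub_left h.le _

theorem IsAtomless.exists_subset_measure_pos_le (hμ : μ.IsAtomless) {A : Set α}
    (hA : MeasurableSet A) (hpos : 0 < μ A) {ε : ℝ≥0∞} (hε : ε ≠ 0) :
    ∃ B, MeasurableSet B ∧ B ⊆ A ∧ 0 < μ B ∧ μ B ≤ ε := by
  have halving : ∀ n : ℕ, ∃ B, MeasurableSet B ∧ B ⊆ A ∧ 0 < μ B ∧ μ B ≤ μ A * 2⁻¹ ^ n := by
    intro n
    induction n with
    | zero => exact ⟨A, hA, subset_rfl, hpos, by simp⟩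
    | succ n ih =>
      obtain ⟨B, hB, hBA, hB0, hBn⟩ := ih
      obtain ⟨C, hC, hCB, hC0, hCB'⟩ := hμ.exists_subset_measure_le_half hB hB0
      refine ⟨C, hC, hCB.trans hBA, hC0, hCB'.trans ?_⟩
      rw [pow_succ, ← mul_assoc, ← div_eq_mul_inv]
      gcongr
  obtain ⟨n, hn⟩ := ENNReal.exists_inv_two_pow_lt (ENNReal.div_pos hε (measure_ne_top μ A)).ne'
  obtain ⟨B, hB, hBA, hB0, hBn⟩ := halving n
  refine ⟨B, hB, hBA, hB0, hBn.trans ?_⟩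
  calc μ A * 2⁻¹ ^ n ≤ μ A * (ε / μ A) := by gcongr
    _ ≤ ε := ENNReal.mul_div_le

theorem exists_subset_measure_le_forall_le_two_mul (A : Set α) (b : ℝ≥0∞) :
    ∃ v, MeasurableSet v ∧ v ⊆ A ∧ μ v ≤ b ∧
      ∀ w, MeasurableSet w → w ⊆ A → μ w ≤ b → μ w ≤ 2 * μ v := by
  set c := ⨆ (w : Set α) (_ : MeasurableSet w ∧ w ⊆ A ∧ μ w ≤ b), μ w
  have le_c : ∀ w, MeasurableSet w → w ⊆ A → μ w ≤ b → μ w ≤ c := fun w hw hwA hwb =>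
    le_iSup₂ (f := fun w (_ : MeasurableSet w ∧ w ⊆ A ∧ μ w ≤ b) => μ w) w ⟨hw, hwA, hwb⟩
  rcases eq_or_ne c 0 with hc | hc
  · refine ⟨∅, .empty, Set.empty_subset A, by simp, fun w hw hwA hwb => ?_⟩
    simpa [hc] using le_c w hw hwA hwb
  have hct : c ≠ ∞ := ne_top_of_le_ne_top (measure_ne_top μ Set.univ)
    (iSup₂_le fun w _ => measure_mono (Set.subset_univ w))
  obtain ⟨v, ⟨hv, hvA, hvb⟩, hcv⟩ :
      ∃ v, (MeasurableSet v ∧ v ⊆ A ∧ μ v ≤ b) ∧ c / 2 < μ v := by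
    have hhalf := ENNReal.half_lt_self hc hct
    simp only [c, lt_iSup_iff, exists_prop] at hhalf
    exact hhalf
  refine ⟨v, hv, hvA, hvb, fun w hw hwA hwb => (le_c w hw hwA hwb).trans ?_⟩
  rw [mul_comm, ← ENNReal.div_le_iff_le_mul (.inl two_ne_zero) (.inl ofNat_ne_top)]
  exact hcv.le

theorem IsAtomless.exists_subset_measure_eq (hμ : μ.IsAtomless) {s : Set α}
    (hs : MeasurableSet s) {r : ℝ≥0∞} (hr : r ≤ μ s) :
    ∃ t, MeasurableSet t ∧ t ⊆ s ∧ μ t = r := by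
  -- Greedy exhaustion: each step adds to `t` a subset of `s \ t` of at least half the largest
  -- measure that still keeps `μ t ≤ r`.
  choose v hv hvs hvr hvmax using fun t : Set α =>
    exists_subset_measure_le_forall_le_two_mul (μ := μ) (s \ t) (r - μ t)
  let t : ℕ → Set α := fun n => Nat.rec ∅ (fun _ t => t ∪ v t) n
  have t_succ : ∀ n, t (n + 1) = t n ∪ v (t n) := fun _ => rfl
  have measure_t_succ : ∀ n, μ (t (n + 1)) = μ (t n) + μ (v (t n)) := fun n => by
    rw [t_succ, measure_union (Set.disjoint_sdiff_right.mono_right (hvs _)) (hv _)]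
  have ht : ∀ n, MeasurableSet (t n) ∧ t n ⊆ s ∧ μ (t n) ≤ r := by
    intro n
    induction n with
    | zero => exact ⟨.empty, Set.empty_subset s, by simp [t]⟩
    | succ n ih =>
      refine ⟨ih.1.union (hv _), Set.union_subset ih.2.1 ((hvs _).trans Set.sdiff_subset), ?_⟩
      rw [measure_t_succ]
      calc μ (t n) + μ (v (t n)) ≤ μ (t n) + (r - μ (t n)) := by gcongr; exact hvr _
        _ = r := add_tsub_cancel_of_le ih.2.2
  have t_mono : Monotone t :=
    monotone_nat_of_le_succ fun n => (t_succ n).symm ▸ Set.subset_union_left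
  set T := ⋃ n, t n
  have hT : MeasurableSet T := .iUnion fun n => (ht n).1
  have hTr : μ T ≤ r := by
    rw [t_mono.measure_iUnion]
    exact iSup_le fun n => (ht n).2.2
  refine ⟨T, hT, Set.iUnion_subset fun n => (ht n).2.1, hTr.antisymm (not_lt.1 fun hlt => ?_)⟩
  -- Some `w ⊆ s \ T` of positive measure still fits, so every step gains at least `μ w / 2`.
  have hroom : 0 < μ (s \ T) := by
    rw [measure_sdiff (Set.iUnion_subset fun n => (ht n).2.1) hT.nullMeasurableSet
      (measure_ne_top μ T)]
    exact tsub_pos_of_lt (hlt.trans_le hr)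
  obtain ⟨w, hw, hws, hw0, hwr⟩ :=
    hμ.exists_subset_measure_pos_le (hs.diff hT) hroom (tsub_pos_of_lt hlt).ne'
  have gain : ∀ n, μ w / 2 ≤ μ (v (t n)) := fun n => ENNReal.div_le_of_le_mul' <|
    hvmax _ w hw (hws.trans (Set.sdiff_subset_sdiff_right (Set.subset_iUnion t n)))
      (hwr.trans (tsub_le_tsub_left (measure_mono (Set.subset_iUnion t n)) r))
  have growth : ∀ n : ℕ, n * (μ w / 2) ≤ μ (t n) := by
    intro n
    induction n with
    | zero => simp
    | succ n ih =>
      rw [measure_t_succ, Nat.cast_succ, add_one_mul]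
      exact add_le_add ih (gain n)
  obtain ⟨n, hn⟩ := ENNReal.exists_nat_mul_gt (ENNReal.div_pos hw0.ne' (ofNat_ne_top (n := 2))).ne'
    (ne_top_of_le_ne_top (measure_ne_top μ s) hr)
  exact (hn.trans_le ((growth n).trans (ht n).2.2)).false

end MeasureTheory.Measure

namespace MeasureTheory

variable {α : Type*} [MeasurableSpace α]

structure IsAdditiveOfMeasureOn {E : Type*} [Add E] (μ : Measure α) (e : Set α) (m : Set α → E) :
    Prop where
  union : ∀ ⦃D D'⦄, MeasurableSet D → MeasurableSet D' → D ⊆ e → D' ⊆ e → Disjoint D D' →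
    m (D ∪ D') = m D + m D'
  eq_of_measure_eq : ∀ ⦃D D'⦄, MeasurableSet D → MeasurableSet D' → D ⊆ e → D' ⊆ e →
    μ D = μ D' → m D = m D'

namespace IsAdditiveOfMeasureOn

variable {E : Type*} [NormedAddCommGroup E] {μ : Measure α} {e : Set α} {m : Set α → E}

theorem empty (hm : IsAdditiveOfMeasureOn μ e m) : m ∅ = 0 := by
  simpa using hm.union .empty .empty (Set.empty_subset e) (Set.empty_subset e)
    (Set.disjoint_empty ∅)

variable [NormedSpace ℝ E]

theorem sub_measureReal_div_smul [IsFiniteMeasure μ] (hm : IsAdditiveOfMeasureOn μ e m) :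
    IsAdditiveOfMeasureOn μ e fun D => m D - (μ.real D / μ.real e) • m e where
  union D D' hD hD' hDe hD'e hdisj := by
    rw [hm.union hD hD' hDe hD'e hdisj, measureReal_union hdisj hD', add_div, add_smul]
    abel
  eq_of_measure_eq D D' hD hD' hDe hD'e h := by
    have hreal : μ.real D = μ.real D' := by rw [measureReal_def, measureReal_def, h]
    rw [hm.eq_of_measure_eq hD hD' hDe hD'e h, hreal]

variable [IsFiniteMeasure μ]

theorem norm_le_half (hμ : μ.IsAtomless) (hm : IsAdditiveOfMeasureOn μ e m)
    (he : MeasurableSet e) (hme : m e = 0) {K : ℝ}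
    (hK : ∀ D, MeasurableSet D → D ⊆ e → ‖m D‖ ≤ K) {D : Set α} (hD : MeasurableSet D)
    (hDe : D ⊆ e) : ‖m D‖ ≤ K / 2 := by
  -- A set of at most half the measure of `e` has a disjoint copy inside `e`, doubling `m`.
  have small : ∀ D, MeasurableSet D → D ⊆ e → 2 * μ.real D ≤ μ.real e → ‖m D‖ ≤ K / 2 := by
    intro D hD hDe h2
    have hroom : μ D ≤ μ (e \ D) := by
      rw [← ENNReal.toReal_le_toReal (measure_ne_top μ D) (measure_ne_top μ _), ← measureReal_def,
        ← measureReal_def, measureReal_sdiff hDe hD]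
      linarith
    obtain ⟨D', hD', hD'e, hD'D⟩ := hμ.exists_subset_measure_eq (he.diff hD) hroom
    have hdouble : m (D ∪ D') = (2 : ℝ) • m D := by
      rw [hm.union hD hD' hDe (hD'e.trans Set.sdiff_subset)
        (Set.disjoint_sdiff_right.mono_right hD'e),
        hm.eq_of_measure_eq hD' hD (hD'e.trans Set.sdiff_subset) hDe hD'D, two_smul]
    have := hK _ (hD.union hD') (Set.union_subset hDe (hD'e.trans Set.sdiff_subset))
    rw [hdouble, norm_smul, Real.norm_two] at this
    linarith
  by_cases h2 : 2 * μ.real D ≤ μ.real e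
  · exact small D hD hDe h2
  -- Otherwise the complement `e \ D` is small, and `m D = - m (e \ D)`.
  have hcompl : m D + m (e \ D) = 0 := by
    rw [← hm.union hD (he.diff hD) hDe Set.sdiff_subset Set.disjoint_sdiff_right,
      Set.union_sdiff_cancel hDe, hme]
  rw [eq_neg_of_add_eq_zero_left hcompl, norm_neg]
  refine small _ (he.diff hD) Set.sdiff_subset ?_
  rw [measureReal_sdiff hDe hD]
  linarith

theorem eq_zero (hμ : μ.IsAtomless) (hm : IsAdditiveOfMeasureOn μ e m)
    (he : MeasurableSet e) (hme : m e = 0)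
    (hbdd : ∃ K, ∀ D, MeasurableSet D → D ⊆ e → ‖m D‖ ≤ K) {D : Set α} (hD : MeasurableSet D)
    (hDe : D ⊆ e) : m D = 0 := by
  obtain ⟨K, hK⟩ := hbdd
  have hK' : ∀ n : ℕ, ∀ D, MeasurableSet D → D ⊆ e → ‖m D‖ ≤ K / 2 ^ n := by
    intro n
    induction n with
    | zero => simpa using hK
    | succ n ih =>
      intro D hD hDe
      rw [pow_succ, ← div_div]
      exact hm.norm_le_half hμ he hme ih hD hDe
  have hlim : Tendsto (fun n : ℕ => K / 2 ^ n) atTop (nhds 0) :=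
    tendsto_const_nhds.div_atTop (tendsto_pow_atTop_atTop_of_one_lt one_lt_two)
  exact norm_le_zero_iff.1 (ge_of_tendsto' hlim fun n => hK' n D hD hDe)

theorem eq_measureReal_div_smul (hμ : μ.IsAtomless) (hm : IsAdditiveOfMeasureOn μ e m)
    (he : MeasurableSet e) (hbdd : ∃ K, ∀ D, MeasurableSet D → D ⊆ e → ‖m D‖ ≤ K)
    {B : Set α} (hB : MeasurableSet B) (hBe : B ⊆ e) :
    m B = (μ.real B / μ.real e) • m e := by
  set ψ : Set α → E := fun D => m D - (μ.real D / μ.real e) • m e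
  have hψe : ψ e = 0 := by
    rcases eq_or_ne (μ.real e) 0 with h0 | h0
    · simp only [ψ]
      rw [h0, zero_div, zero_smul, sub_zero,
        hm.eq_of_measure_eq he .empty subset_rfl (Set.empty_subset e)
          (by rwa [measure_empty, ← measureReal_eq_zero_iff]), hm.empty]
    · simp only [ψ]
      rw [div_self h0, one_smul, sub_self]
  obtain ⟨K, hK⟩ := hbdd
  have hψbdd : ∀ D, MeasurableSet D → D ⊆ e → ‖ψ D‖ ≤ K + ‖m e‖ := by
    intro D hD hDe
    have hratio : ‖μ.real D / μ.real e‖ ≤ 1 := by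
      rw [Real.norm_of_nonneg (by positivity)]
      exact div_le_one_of_le₀ (measureReal_mono hDe) measureReal_nonneg
    calc ‖ψ D‖ ≤ ‖m D‖ + ‖μ.real D / μ.real e‖ * ‖m e‖ := by
          rw [← norm_smul]; exact norm_sub_le _ _
      _ ≤ K + 1 * ‖m e‖ := by gcongr; exact hK D hD hDe
      _ = K + ‖m e‖ := by rw [one_mul]
  exact sub_eq_zero.1 <| hm.sub_measureReal_div_smul.eq_zero hμ he hψe ⟨_, hψbdd⟩ hB hBe

end IsAdditiveOfMeasureOn

section Lift

variable {H : Type*} [MeasurableSpace H] {μ : Measure α} [IsFiniteMeasure μ]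

theorem map_piecewise_const_eq_of_measure_eq {X : α → H} (hX : Measurable X) {c v : H}
    {B B' : Set α} [DecidablePred (· ∈ B)] [DecidablePred (· ∈ B')]
    (hB : MeasurableSet B) (hB' : MeasurableSet B') (hBc : B ⊆ X ⁻¹' {c})
    (hB'c : B' ⊆ X ⁻¹' {c}) (h : μ B = μ B') :
    μ.map (B.piecewise (fun _ => v) X) = μ.map (B'.piecewise (fun _ => v) X) := by
  classical
  have hmeasure : ∀ (D : Set α) [DecidablePred (· ∈ D)], MeasurableSet D → D ⊆ X ⁻¹' {c} →
      ∀ S, MeasurableSet S → μ.map (D.piecewise (fun _ => v) X) S =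
        (if v ∈ S then μ D else 0) + (μ (X ⁻¹' S) - if c ∈ S then μ D else 0) := by
    intro D _ hD hDc S hS
    rw [Measure.map_apply (Measurable.piecewise hD measurable_const hX) hS,
      Set.piecewise_preimage, Set.ite, measure_union
        (Set.disjoint_sdiff_right.mono_left Set.inter_subset_right) ((hX hS).diff hD)]
    congr 1
    · by_cases hv : v ∈ S <;> simp [hv]
    · by_cases hc : c ∈ S
      · rw [if_pos hc, measure_sdiff (hDc.trans (Set.preimage_mono (Set.singleton_subset_iff.2 hc)))
          hD.nullMeasurableSet (measure_ne_top μ D)]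
      · rw [if_neg hc, tsub_zero,
          (((Set.disjoint_singleton_right.2 hc).preimage X).mono_right hDc).sdiff_eq_left]
  ext S hS
  rw [hmeasure B hB hBc S hS, hmeasure B' hB' hB'c S hS, h]

variable [NormedAddCommGroup H] [NormedSpace ℝ H] {U : Type*} [NormedAddCommGroup U]
  [NormedSpace ℝ U] {p : ℝ≥0∞} [Fact (1 ≤ p)]

theorem _root_.HasFDerivAt.apply_indicatorConstLp_eq_of_measure_eq {fhat : Lp H p μ → U}
    (hlaw : ∀ X X' : Lp H p μ, μ.map ⇑X = μ.map ⇑X' → fhat X = fhat X')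
    {X₀ : α → H} (hX₀meas : Measurable X₀) (hX₀ : MemLp X₀ p μ) {L : Lp H p μ →L[ℝ] U}
    (hL : HasFDerivAt fhat L (hX₀.toLp X₀)) {c : H} {B B' : Set α} (hB : MeasurableSet B)
    (hB' : MeasurableSet B') (hBc : B ⊆ X₀ ⁻¹' {c}) (hB'c : B' ⊆ X₀ ⁻¹' {c}) (h : μ B = μ B')
    (u : H) :
    L (indicatorConstLp p hB (measure_ne_top μ B) u) =
      L (indicatorConstLp p hB' (measure_ne_top μ B') u) := by
  classical
  have line : ∀ D (hD : MeasurableSet D), D ⊆ X₀ ⁻¹' {c} → ∀ t : ℝ,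
      ⇑(hX₀.toLp X₀ + t • indicatorConstLp p hD (measure_ne_top μ D) u) =ᵐ[μ]
        D.piecewise (fun _ => c + t • u) X₀ := by
    intro D hD hDc t
    filter_upwards [Lp.coeFn_add (hX₀.toLp X₀) (t • indicatorConstLp p hD (measure_ne_top μ D) u),
      Lp.coeFn_smul t (indicatorConstLp p hD (measure_ne_top μ D) u), hX₀.coeFn_toLp,
      indicatorConstLp_coeFn (p := p) (hs := hD) (hμs := measure_ne_top μ D) (c := u)]
      with ω hadd hsmul hX hind
    rw [hadd, Pi.add_apply, hsmul, Pi.smul_apply, hX, hind]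
    by_cases hω : ω ∈ D
    · rw [Set.indicator_of_mem hω, Set.piecewise_eq_of_mem _ _ _ hω, hDc hω]
    · rw [Set.indicator_of_notMem hω, Set.piecewise_eq_of_notMem _ _ _ hω, smul_zero, add_zero]
  set X := hX₀.toLp X₀
  set V := indicatorConstLp p hB (measure_ne_top μ B) u
  set V' := indicatorConstLp p hB' (measure_ne_top μ B') u
  have same_line : (fun t : ℝ => fhat (X + t • V)) = fun t : ℝ => fhat (X + t • V') := by
    funext t
    refine hlaw _ _ ?_
    rw [Measure.map_congr (line B hB hBc t), Measure.map_congr (line B' hB' hB'c t)]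
    exact map_piecewise_const_eq_of_measure_eq hX₀meas hB hB' hBc hB'c h
  calc L V = lineDeriv ℝ fhat X V := ((hL.hasLineDerivAt V).lineDeriv).symm
    _ = lineDeriv ℝ fhat X V' := by simp only [lineDeriv, same_line]
    _ = L V' := (hL.hasLineDerivAt V').lineDeriv

theorem _root_.HasFDerivAt.apply_indicatorConstLp_eq_measureReal_div_smul [MeasurableSingletonClass H]
    (hμ : μ.IsAtomless) {fhat : Lp H p μ → U}
    (hlaw : ∀ X X' : Lp H p μ, μ.map ⇑X = μ.map ⇑X' → fhat X = fhat X')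
    {X₀ : α → H} (hX₀meas : Measurable X₀) (hX₀ : MemLp X₀ p μ) {L : Lp H p μ →L[ℝ] U}
    (hL : HasFDerivAt fhat L (hX₀.toLp X₀)) {c : H} {B : Set α} (hB : MeasurableSet B)
    (hBc : B ⊆ X₀ ⁻¹' {c}) (u : H) :
    L (indicatorConstLp p hB (measure_ne_top μ B) u) =
      (μ.real B / μ.real (X₀ ⁻¹' {c})) •
        L (indicatorConstLp p (hX₀meas (measurableSet_singleton c)) (measure_ne_top μ _) u) := by
  classical
  set m : Set α → U := fun D =>
    if hD : MeasurableSet D then L (indicatorConstLp p hD (measure_ne_top μ D) u) else 0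
  have hm : IsAdditiveOfMeasureOn μ (X₀ ⁻¹' {c}) m := by
    refine ⟨fun D D' hD hD' _ _ hdisj => ?_, fun D D' hD hD' hDc hD'c h => ?_⟩
    · simp only [m, dif_pos (hD.union hD'), dif_pos hD, dif_pos hD',
        indicatorConstLp_disjoint_union hD hD' (measure_ne_top μ D) (measure_ne_top μ D') hdisj,
        map_add]
    · simp only [m, dif_pos hD, dif_pos hD']
      exact hL.apply_indicatorConstLp_eq_of_measure_eq hlaw hX₀meas hX₀ hD hD' hDc hD'c h u
  have hbdd : ∀ D, MeasurableSet D → ‖m D‖ ≤ ‖L‖ * (‖u‖ * μ.real Set.univ ^ (1 / p.toReal)) := by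
    intro D hD
    simp only [m, dif_pos hD]
    refine (L.le_opNorm _).trans (mul_le_mul_of_nonneg_left (norm_indicatorConstLp_le.trans ?_)
      (norm_nonneg L))
    exact mul_le_mul_of_nonneg_left (Real.rpow_le_rpow measureReal_nonneg
      (measureReal_mono (Set.subset_univ D)) (by positivity)) (norm_nonneg u)
  simpa only [m, dif_pos hB, dif_pos (hX₀meas (measurableSet_singleton c))] using
    hm.eq_measureReal_div_smul hμ (hX₀meas (measurableSet_singleton c))
      ⟨_, fun D hD _ => hbdd D hD⟩ hB hBc

end Lift

theorem indicatorConstLp_eq_sum_of_iUnion_eq {E : Type*} [NormedAddCommGroup E] {μ : Measure α}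
    [IsFiniteMeasure μ] {p : ℝ≥0∞} {ι : Type*} [Fintype ι] {s : ι → Set α}
    (hs : ∀ i, MeasurableSet (s i)) (hdisj : Pairwise (Function.onFun Disjoint s)) {A : Set α}
    (hA : MeasurableSet A) (hcover : ⋃ i, s i = A) (c : E) :
    indicatorConstLp p hA (measure_ne_top μ A) c =
      ∑ i, indicatorConstLp p (hs i) (measure_ne_top μ (s i)) c := by
  subst hcover
  ext1
  filter_upwards [indicatorConstLp_coeFn (p := p) (hs := hA) (hμs := measure_ne_top μ _) (c := c),
    Lp.coeFn_fun_finsetSum (p := p) Finset.univ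
      fun i => indicatorConstLp p (hs i) (measure_ne_top μ (s i)) c,
    ae_all_iff.2 fun i => indicatorConstLp_coeFn (p := p) (hs := hs i)
      (hμs := measure_ne_top μ (s i)) (c := c)] with ω hunion hsum hpieces
  rw [hunion, hsum]
  simp only [hpieces]
  simpa using congrFun (Finset.indicator_biUnion Finset.univ s
    (f := fun _ => c) (by rw [Finset.coe_univ]; exact hdisj.set_pairwise Set.univ)) ω

end MeasureTheory

theorem stmt12_general {Ω H U : Type*}
    [MeasurableSpace Ω]
    (P : Measure Ω) [IsProbabilityMeasure P]
    (hatomless : ∀ A : Set Ω, MeasurableSet A → 0 < P A →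
      ∃ B : Set Ω, MeasurableSet B ∧ B ⊆ A ∧ 0 < P B ∧ P B < P A)
    [NormedAddCommGroup H] [InnerProductSpace ℝ H]
    [MeasurableSpace H] [BorelSpace H]
    [NormedAddCommGroup U] [InnerProductSpace ℝ U]
    (fhat : Lp H 2 P → U)
    -- `f̂` is a lift: it only depends on the law of its argument
    (hlaw : ∀ X X' : Lp H 2 P, P.map ⇑X = P.map ⇑X' → fhat X = fhat X')
    (Df : Lp H 2 P → (Lp H 2 P →L[ℝ] U))
    (hderiv : ∀ X : Lp H 2 P, HasFDerivAt fhat (Df X) X)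
    (X0 : Ω → H) (hX0meas : Measurable X0) (hX0 : MemLp X0 2 P)
    (N : ℕ) (x : Fin N → H) (hinj : Function.Injective x)
    (hvals : ∀ ω, ∃ k, X0 ω = x k)
    (A : Set Ω) (hA : MeasurableSet A) (u : H) :
    Df (MemLp.toLp X0 hX0) (indicatorConstLp 2 hA (measure_ne_top P A) u) =
      ∑ k, ((P (A ∩ X0 ⁻¹' {x k}) / P (X0 ⁻¹' {x k})).toReal) •
        Df (MemLp.toLp X0 hX0)
          (indicatorConstLp 2 (hX0meas (isClosed_singleton.measurableSet))
            (measure_ne_top P (X0 ⁻¹' {x k})) u) := by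
  have hpiece : ∀ k, MeasurableSet (A ∩ X0 ⁻¹' {x k}) :=
    fun k => hA.inter (hX0meas (measurableSet_singleton (x k)))
  have hdisj : Pairwise (Function.onFun Disjoint fun k => A ∩ X0 ⁻¹' {x k}) := fun k j hkj =>
    (((Set.disjoint_singleton.2 (hinj.ne hkj)).preimage X0).mono Set.inter_subset_right
      Set.inter_subset_right)
  have hcover : ⋃ k, A ∩ X0 ⁻¹' {x k} = A := by
    rw [← Set.inter_iUnion, (Set.iUnion_eq_univ_iff (f := fun k => X0 ⁻¹' {x k})).2 hvals,
      Set.inter_univ]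
  rw [indicatorConstLp_eq_sum_of_iUnion_eq hpiece hdisj hA hcover, map_sum]
  refine Finset.sum_congr rfl fun k _ => ?_
  rw [ENNReal.toReal_div]
  exact (hderiv _).apply_indicatorConstLp_eq_measureReal_div_smul hatomless hlaw hX0meas hX0
    (hpiece k) Set.inter_subset_right u

/-- Disintegration of the derivative of the lifted map at a finitely supported random
variable: if the lift `f̂` of `f : P₂(H) → U` is Λ-continuously Fréchet differentiable
and `X₀` takes the finitely many values `x₁,…,x_N` with positive probabilities, then
`Df̂(X₀)(1_A u) = ∑ₖ ℙ(A | X₀ = xₖ) · Df̂(X₀)(1_{X₀ = xₖ} u)`. -/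
theorem stmt12 {Ω H U : Type*}
    [MeasurableSpace Ω] [TopologicalSpace Ω] [PolishSpace Ω] [BorelSpace Ω]
    (P : Measure Ω) [IsProbabilityMeasure P]
    (hatomless : ∀ A : Set Ω, MeasurableSet A → 0 < P A →
      ∃ B : Set Ω, MeasurableSet B ∧ B ⊆ A ∧ 0 < P B ∧ P B < P A)
    [NormedAddCommGroup H] [InnerProductSpace ℝ H] [CompleteSpace H]
    [SecondCountableTopology H] [MeasurableSpace H] [BorelSpace H]
    [NormedAddCommGroup U] [InnerProductSpace ℝ U] [CompleteSpace U]
    (fhat : Lp H 2 P → U)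
    -- `f̂` is a lift: it only depends on the law of its argument
    (hlaw : ∀ X X' : Lp H 2 P, P.map ⇑X = P.map ⇑X' → fhat X = fhat X')
    (Df : Lp H 2 P → (Lp H 2 P →L[ℝ] U))
    (hderiv : ∀ X : Lp H 2 P, HasFDerivAt fhat (Df X) X)
    -- Λ-continuity: finite 2-semivariation norms and continuity in that norm
    (hΛfin : ∀ X : Lp H 2 P, opSemiVar P 2 (Df X) < ∞)
    (hΛcont : ∀ (X : Lp H 2 P) (ε : ℝ≥0∞), 0 < ε → ∃ δ > (0 : ℝ), ∀ X' : Lp H 2 P,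
      ‖X' - X‖ < δ → opSemiVar P 2 (Df X' - Df X) < ε)
    (X0 : Ω → H) (hX0meas : Measurable X0) (hX0 : MemLp X0 2 P)
    (N : ℕ) (x : Fin N → H) (hinj : Function.Injective x)
    (hvals : ∀ ω, ∃ k, X0 ω = x k)
    (hpos : ∀ k, 0 < P (X0 ⁻¹' {x k}))
    (A : Set Ω) (hA : MeasurableSet A) (u : H) :
    Df (MemLp.toLp X0 hX0) (indicatorConstLp 2 hA (measure_ne_top P A) u) =
      ∑ k, ((P (A ∩ X0 ⁻¹' {x k}) / P (X0 ⁻¹' {x k})).toReal) •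
        Df (MemLp.toLp X0 hX0)
          (indicatorConstLp 2 (hX0meas (isClosed_singleton.measurableSet))
            (measure_ne_top P (X0 ⁻¹' {x k})) u) :=
  stmt12_general P hatomless fhat hlaw Df hderiv X0 hX0meas hX0 N x hinj hvals A hA u
end
end

section
/- Let H, U be separable Hilbert spaces and f : P_2(H) → U absolutely continuously L-differentiable, i.e. its lift f̂ on L^2(Ω,H) is Λ-continuously Fréchet differentiable with regular L-derivative ∂_μ f(μ)(·) ∈ L^2(H,μ;L(H,U)) satisfying Df̂(X)Y = E[∂_μ f(law X)(X) Y] for all X, Y ∈ L^2(Ω,H). If ⦀Df̂(X)⦀_{2,ℙ} ≤ C for all X (equivalently E[‖∂_μ f(law X)(X)‖²]^{1/2} ≤ C), then f is Lipschitz with respect to the 2-Wasserstein metric: ‖f(μ) − f(ν)‖_U ≤ C · W_2(μ, ν) for all μ, ν ∈ P_2(H). -/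
/-! The semivariation norm dominates the operator norm, because simple functions are dense in `L²`
and each of them is a finite sum of constants on disjoint sets; so `‖Df̂(X)‖ ≤ C` and `f̂` is
`C`-Lipschitz by the mean value inequality. Every coupling `π` of `μ` and `ν` is the joint law of
a pair `(X, Y)` on `Ω`: push `π` forward along a bounded measurable embedding `H × H → H`, realize
that law, and pull back along a measurable left inverse. Then
`‖f μ - f ν‖ = ‖f̂ X - f̂ Y‖ ≤ C ‖X - Y‖_{L²} = C (∫ ‖x - y‖² dπ)^{1/2}`, and we take the
infimum over `π`. -/

open MeasureTheory ENNReal Filter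

noncomputable section

def wass2 {H : Type*} [NormedAddCommGroup H] [MeasurableSpace H]
    (μ ν : Measure H) : ℝ≥0∞ :=
  (⨅ (π : Measure (H × H)) (_ : π.map Prod.fst = μ) (_ : π.map Prod.snd = ν),
    ∫⁻ z, (‖z.1 - z.2‖₊ : ℝ≥0∞) ^ 2 ∂π) ^ (1 / 2 : ℝ)

theorem MeasureTheory.SimpleFunc.exists_fin_sum_indicator {α β : Type*} [MeasurableSpace α]
    [AddCommMonoid β] (φ : SimpleFunc α β) :
    ∃ (n : ℕ) (As : Fin n → Set α) (xs : Fin n → β), (∀ i, MeasurableSet (As i)) ∧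
      Pairwise (Function.onFun Disjoint As) ∧
      ∀ a, ∑ i, (As i).indicator (fun _ => xs i) a = φ a := by
  classical
  let e := φ.range.equivFin.symm
  refine ⟨_, fun i => φ ⁻¹' {(e i : β)}, fun i => e i, fun i => φ.measurableSet_fiber _,
    fun i j hij => ?_, fun a => ?_⟩
  · exact (Set.disjoint_singleton.2 fun h => hij (e.injective (Subtype.ext h))).preimage φ
  · rw [Finset.sum_eq_single (e.symm ⟨φ a, φ.mem_range_self a⟩)]
    · simp
    · intro i _ hi
      refine Set.indicator_of_notMem (fun h => hi ?_) _
      exact (e.symm_apply_eq.2 (Subtype.ext h :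
        (⟨φ a, φ.mem_range_self a⟩ : φ.range) = e i)).symm
    · simp

section OpSemiVar

variable {Ω E F : Type*} [MeasurableSpace Ω] {P : Measure Ω} [IsFiniteMeasure P]
  [NormedAddCommGroup E] [NormedSpace ℝ E] [NormedAddCommGroup F] [NormedSpace ℝ F]
  {p : ℝ≥0∞} [Fact (1 ≤ p)]

theorem enorm_apply_le_opSemiVar_of_ae_eq_simpleFunc (L : Lp E p P →L[ℝ] F)
    {g : Lp E p P} {φ : SimpleFunc Ω E} (hgφ : g =ᵐ[P] φ) (hg : ‖g‖ₑ ≤ 1) :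
    ‖L g‖ₑ ≤ opSemiVar P p L := by
  obtain ⟨n, As, xs, hAs, hdisj, hsum⟩ := φ.exists_fin_sum_indicator
  have hg_eq : g = ∑ i, indicatorConstLp p (hAs i) (measure_ne_top P (As i)) (xs i) := by
    refine Lp.ext ?_
    filter_upwards [hgφ, Lp.coeFn_fun_finsetSum Finset.univ
      fun i => indicatorConstLp p (hAs i) (measure_ne_top P (As i)) (xs i),
      ae_all_iff.2 fun i => indicatorConstLp_coeFn (p := p) (hs := hAs i)
        (hμs := measure_ne_top P (As i)) (c := xs i)] with ω hφ hs hi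
    simp only [hφ, hs, hi, hsum]
  have hnorm : eLpNorm (fun ω => ∑ i, (As i).indicator (fun _ => xs i) ω) p P ≤ 1 := by
    rwa [funext hsum, ← eLpNorm_congr_ae hgφ, ← Lp.enorm_def]
  calc ‖L g‖ₑ ≤ ∑ i, ‖L (indicatorConstLp p (hAs i) (measure_ne_top P (As i)) (xs i))‖ₑ := by
        rw [hg_eq, map_sum]
        exact enorm_sum_le _ _
    _ ≤ opSemiVar P p L :=
        le_iSup_of_le n <| le_iSup_of_le As <| le_iSup_of_le xs <| le_iSup_of_le hAs <|
          le_iSup_of_le hdisj <| le_iSup_of_le hnorm le_rfl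

theorem enorm_apply_le_opSemiVar_mul_of_ae_eq_simpleFunc (L : Lp E p P →L[ℝ] F)
    {g : Lp E p P} {φ : SimpleFunc Ω E} (hgφ : g =ᵐ[P] φ) :
    ‖L g‖ₑ ≤ opSemiVar P p L * ‖g‖ₑ := by
  rcases eq_or_ne g 0 with rfl | hg0
  · simp
  set c := ‖g‖ with hc
  have hc0 : c ≠ 0 := norm_ne_zero_iff.2 hg0
  have hscaled : c⁻¹ • g =ᵐ[P] ⇑(c⁻¹ • φ) := by
    filter_upwards [Lp.coeFn_smul c⁻¹ g, hgφ] with ω h1 h2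
    simp [h1, h2]
  have hunit : ‖c⁻¹ • g‖ₑ ≤ 1 := by
    rw [← ofReal_norm, norm_smul, norm_inv, norm_norm, inv_mul_cancel₀ hc0, ofReal_one]
  have hg_eq : g = c • (c⁻¹ • g) := by rw [smul_smul, mul_inv_cancel₀ hc0, one_smul]
  calc ‖L g‖ₑ = ‖g‖ₑ * ‖L (c⁻¹ • g)‖ₑ := by
        conv_lhs => rw [hg_eq]
        rw [map_smul, enorm_smul, hc, enorm_norm]
    _ ≤ ‖g‖ₑ * opSemiVar P p L := by
        gcongr
        exact enorm_apply_le_opSemiVar_of_ae_eq_simpleFunc L hscaled hunit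
    _ = opSemiVar P p L * ‖g‖ₑ := mul_comm _ _

theorem enorm_le_opSemiVar (hp : p ≠ ∞) (L : Lp E p P →L[ℝ] F) : ‖L‖ₑ ≤ opSemiVar P p L := by
  rcases eq_or_ne (opSemiVar P p L) ∞ with htop | hfin
  · simp [htop]
  have hbound : ∀ g, ‖L g‖ ≤ (opSemiVar P p L).toReal * ‖g‖ := by
    intro g
    refine (Lp.simpleFunc.denseRange hp).induction_on g ?_ fun s => ?_
    · exact isClosed_le (continuous_norm.comp L.continuous) (continuous_const.mul continuous_norm)
    · have hs := enorm_apply_le_opSemiVar_mul_of_ae_eq_simpleFunc L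
        (Lp.simpleFunc.toSimpleFunc_eq_toFun s).symm
      rw [← ofReal_norm, ← ofReal_norm, ← ofReal_toReal hfin,
        ← ENNReal.ofReal_mul toReal_nonneg] at hs
      exact (ENNReal.ofReal_le_ofReal_iff (by positivity)).1 hs
  rw [← ofReal_norm, ← ofReal_toReal hfin]
  exact ENNReal.ofReal_le_ofReal (L.opNorm_le_bound toReal_nonneg hbound)

end OpSemiVar

theorem ENNReal.iInf_rpow {ι : Sort*} (f : ι → ℝ≥0∞) {r : ℝ} (hr : 0 < r) :
    (⨅ i, f i) ^ r = ⨅ i, f i ^ r :=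
  (ENNReal.monotone_rpow_of_nonneg hr.le).map_iInf_of_continuousAt
    (ENNReal.continuous_rpow_const.continuousAt) (ENNReal.top_rpow_of_pos hr)

theorem MeasureTheory.eLpNorm_two_eq_lintegral {α E : Type*} [MeasurableSpace α]
    [NormedAddCommGroup E] (f : α → E) (μ : Measure α) :
    eLpNorm f 2 μ = (∫⁻ x, (‖f x‖₊ : ℝ≥0∞) ^ 2 ∂μ) ^ (1 / 2 : ℝ) := by
  rw [eLpNorm_eq_lintegral_rpow_enorm_toReal two_ne_zero ofNat_ne_top]
  simp only [toReal_ofNat, enorm_eq_nnnorm]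
  norm_cast

theorem MeasureTheory.memLp_two_id {E : Type*} [NormedAddCommGroup E] [MeasurableSpace E]
    [OpensMeasurableSpace E] [SecondCountableTopology E] {μ : Measure E}
    (hμ : ∫⁻ y, (‖y‖₊ : ℝ≥0∞) ^ 2 ∂μ ≠ ∞) : MemLp id 2 μ :=
  ⟨aestronglyMeasurable_id, by
    rw [eLpNorm_two_eq_lintegral]
    exact rpow_lt_top_of_nonneg (by norm_num) hμ⟩

section Wasserstein

variable {H : Type*} [NormedAddCommGroup H] [MeasurableSpace H]

theorem wass2_eq_iInf (μ ν : Measure H) :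
    wass2 μ ν = ⨅ (π : Measure (H × H)) (_ : π.map Prod.fst = μ) (_ : π.map Prod.snd = ν),
      (∫⁻ z, (‖z.1 - z.2‖₊ : ℝ≥0∞) ^ 2 ∂π) ^ (1 / 2 : ℝ) := by
  simp only [wass2, ENNReal.iInf_rpow _ one_half_pos]

theorem wass2_le {μ ν : Measure H} {π : Measure (H × H)} (hπ₁ : π.map Prod.fst = μ)
    (hπ₂ : π.map Prod.snd = ν) :
    wass2 μ ν ≤ (∫⁻ z, (‖z.1 - z.2‖₊ : ℝ≥0∞) ^ 2 ∂π) ^ (1 / 2 : ℝ) := by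
  rw [wass2_eq_iInf]
  exact iInf₂_le_of_le π hπ₁ (iInf_le _ hπ₂)

theorem le_mul_wass2 {μ ν : Measure H} {a c : ℝ≥0∞} (hc : c ≠ ∞) {π₀ : Measure (H × H)}
    (hπ₀₁ : π₀.map Prod.fst = μ) (hπ₀₂ : π₀.map Prod.snd = ν)
    (h : ∀ π : Measure (H × H), π.map Prod.fst = μ → π.map Prod.snd = ν →
      a ≤ c * (∫⁻ z, (‖z.1 - z.2‖₊ : ℝ≥0∞) ^ 2 ∂π) ^ (1 / 2 : ℝ)) :
    a ≤ c * wass2 μ ν := by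
  rcases eq_or_ne c 0 with rfl | hc0
  · simpa using h π₀ hπ₀₁ hπ₀₂
  rw [wass2_eq_iInf]
  simp_rw [ENNReal.mul_iInf_of_ne hc0 hc]
  exact le_iInf fun π => le_iInf₂ (h π)

end Wasserstein

theorem exists_measurableEmbedding_bounded (α : Type*) [MeasurableSpace α] [StandardBorelSpace α]
    (E : Type*) [NormedAddCommGroup E] [NormedSpace ℝ E] [Nontrivial E] [MeasurableSpace E]
    [BorelSpace E] :
    ∃ F : α → E, MeasurableEmbedding F ∧ ∃ M, ∀ a, ‖F a‖ ≤ M := by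
  obtain ⟨j, hj⟩ := exists_measurableEmbedding_real α
  obtain ⟨v, hv⟩ := exists_ne (0 : E)
  have hg : MeasurableEmbedding fun t : ℝ => Real.arctan t • v :=
    (Real.continuous_arctan.smul continuous_const).measurableEmbedding
      ((smul_left_injective ℝ hv).comp Real.arctan_injective)
  refine ⟨_, hg.comp hj, Real.pi / 2 * ‖v‖, fun a => ?_⟩
  rw [Function.comp_apply, norm_smul, Real.norm_eq_abs]
  gcongr
  exact abs_le.2 ⟨(Real.neg_pi_div_two_lt_arctan _).le, (Real.arctan_lt_pi_div_two _).le⟩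

theorem exists_measurable_map_eq_of_forall_exists_Lp {Ω H : Type*} [MeasurableSpace Ω]
    {P : Measure Ω} [NormedAddCommGroup H] [NormedSpace ℝ H] [Nontrivial H] [MeasurableSpace H]
    [BorelSpace H]
    (hrealize : ∀ μ : Measure H, IsProbabilityMeasure μ →
      (∫⁻ y, (‖y‖₊ : ℝ≥0∞) ^ 2 ∂μ) ≠ ∞ → ∃ X : Lp H 2 P, P.map ⇑X = μ)
    {α : Type*} [MeasurableSpace α] [StandardBorelSpace α] (π : Measure α)
    [IsProbabilityMeasure π] :
    ∃ T : Ω → α, Measurable T ∧ P.map T = π := by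
  obtain ⟨F, hF, M, hM⟩ := exists_measurableEmbedding_bounded α H
  have := nonempty_of_isProbabilityMeasure π
  obtain ⟨r, hr, hrF⟩ := hF.exists_measurable_extend measurable_id fun _ => inferInstance
  have hmoment : ∫⁻ y, (‖y‖₊ : ℝ≥0∞) ^ 2 ∂(π.map F) ≠ ∞ := by
    rw [lintegral_map (by fun_prop) hF.measurable]
    refine ne_top_of_le_ne_top (lintegral_const_lt_top (μ := π)
      (pow_ne_top (ofReal_ne_top (r := M)) (n := 2))).ne ?_
    refine lintegral_mono fun a => ?_
    gcongr
    rw [← enorm_eq_nnnorm, ← ofReal_norm]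
    exact ENNReal.ofReal_le_ofReal (hM a)
  obtain ⟨Z, hZ⟩ := hrealize _ (Measure.isProbabilityMeasure_map hF.measurable.aemeasurable) hmoment
  have hZm : Measurable Z := (Lp.stronglyMeasurable Z).measurable
  refine ⟨r ∘ Z, hr.comp hZm, ?_⟩
  rw [← Measure.map_map hr hZm, hZ, Measure.map_map hr hF.measurable, hrF, Measure.map_id]

section Coupling

variable {Ω H : Type*} [MeasurableSpace Ω] {P : Measure Ω} [NormedAddCommGroup H]
  [MeasurableSpace H] [BorelSpace H] [SecondCountableTopology H]

theorem exists_Lp_map_eq_enorm_sub_eq_of_map_eq {μ ν : Measure H}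
    (hμ : ∫⁻ y, (‖y‖₊ : ℝ≥0∞) ^ 2 ∂μ ≠ ∞) (hν : ∫⁻ y, (‖y‖₊ : ℝ≥0∞) ^ 2 ∂ν ≠ ∞)
    {π : Measure (H × H)} (hπ₁ : π.map Prod.fst = μ) (hπ₂ : π.map Prod.snd = ν)
    {T : Ω → H × H} (hT : Measurable T) (hTπ : P.map T = π) :
    ∃ X Y : Lp H 2 P, P.map X = μ ∧ P.map Y = ν ∧
      ‖X - Y‖ₑ = (∫⁻ z, (‖z.1 - z.2‖₊ : ℝ≥0∞) ^ 2 ∂π) ^ (1 / 2 : ℝ) := by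
  have hX : MemLp (Prod.fst ∘ T) 2 P := by
    refine MemLp.comp_of_map ?_ hT.aemeasurable
    rw [hTπ]
    exact (memLp_map_measure_iff aestronglyMeasurable_id measurable_fst.aemeasurable).1
      (hπ₁ ▸ memLp_two_id hμ)
  have hY : MemLp (Prod.snd ∘ T) 2 P := by
    refine MemLp.comp_of_map ?_ hT.aemeasurable
    rw [hTπ]
    exact (memLp_map_measure_iff aestronglyMeasurable_id measurable_snd.aemeasurable).1
      (hπ₂ ▸ memLp_two_id hν)
  refine ⟨hX.toLp, hY.toLp, ?_, ?_, ?_⟩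
  · rw [Measure.map_congr hX.coeFn_toLp, ← Measure.map_map measurable_fst hT, hTπ, hπ₁]
  · rw [Measure.map_congr hY.coeFn_toLp, ← Measure.map_map measurable_snd hT, hTπ, hπ₂]
  · have hsub : ⇑(hX.toLp - hY.toLp) =ᵐ[P] (fun z : H × H => z.1 - z.2) ∘ T := by
      filter_upwards [Lp.coeFn_sub hX.toLp hY.toLp, hX.coeFn_toLp, hY.coeFn_toLp] with ω h h₁ h₂
      rw [h, Pi.sub_apply, h₁, h₂]
      rfl
    rw [Lp.enorm_def, eLpNorm_congr_ae hsub, ← eLpNorm_map_measure (by fun_prop) hT.aemeasurable,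
      hTπ, eLpNorm_two_eq_lintegral]

end Coupling

theorem norm_sub_le_mul_wass2_of_lipschitz_lift {Ω H U : Type*} [MeasurableSpace Ω]
    {P : Measure Ω} [NormedAddCommGroup H] [NormedSpace ℝ H] [CompleteSpace H]
    [SecondCountableTopology H] [MeasurableSpace H] [BorelSpace H] [NormedAddCommGroup U]
    (f : Measure H → U)
    (hrealize : ∀ μ : Measure H, IsProbabilityMeasure μ →
      (∫⁻ y, (‖y‖₊ : ℝ≥0∞) ^ 2 ∂μ) ≠ ∞ → ∃ X : Lp H 2 P, P.map ⇑X = μ)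
    {C : ℝ} (hC : 0 ≤ C) (hlip : ∀ X Y : Lp H 2 P, ‖f (P.map X) - f (P.map Y)‖ ≤ C * ‖X - Y‖)
    {μ ν : Measure H} [IsProbabilityMeasure μ] [IsProbabilityMeasure ν]
    (hμ : ∫⁻ y, (‖y‖₊ : ℝ≥0∞) ^ 2 ∂μ ≠ ∞) (hν : ∫⁻ y, (‖y‖₊ : ℝ≥0∞) ^ 2 ∂ν ≠ ∞) :
    ‖f μ - f ν‖ ≤ C * (wass2 μ ν).toReal := by
  rcases subsingleton_or_nontrivial H with hH | hH
  · obtain ⟨X, rfl⟩ := hrealize μ ‹_› hμ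
    obtain ⟨Y, rfl⟩ := hrealize ν ‹_› hν
    rw [Lp.ext (ae_of_all P fun _ => Subsingleton.elim (X _) (Y _)), sub_self, norm_zero]
    positivity
  have hcoupling : ∀ π : Measure (H × H), π.map Prod.fst = μ → π.map Prod.snd = ν →
      ∃ X Y : Lp H 2 P, P.map X = μ ∧ P.map Y = ν ∧
        ‖X - Y‖ₑ = (∫⁻ z, (‖z.1 - z.2‖₊ : ℝ≥0∞) ^ 2 ∂π) ^ (1 / 2 : ℝ) := by
    intro π hπ₁ hπ₂
    have : IsProbabilityMeasure (π.map Prod.fst) := hπ₁ ▸ ‹_›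
    have : IsProbabilityMeasure π := Measure.isProbabilityMeasure_of_map Prod.fst
    obtain ⟨T, hT, hTπ⟩ := exists_measurable_map_eq_of_forall_exists_Lp hrealize π
    exact exists_Lp_map_eq_enorm_sub_eq_of_map_eq hμ hν hπ₁ hπ₂ hT hTπ
  have hprod₁ : (μ.prod ν).map Prod.fst = μ := by simp
  have hprod₂ : (μ.prod ν).map Prod.snd = ν := by simp
  have hW : wass2 μ ν ≠ ∞ := by
    obtain ⟨X, Y, -, -, hXY⟩ := hcoupling _ hprod₁ hprod₂
    exact ne_top_of_le_ne_top (hXY ▸ enorm_ne_top) (wass2_le hprod₁ hprod₂)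
  rw [← ENNReal.ofReal_le_ofReal_iff (by positivity), ENNReal.ofReal_mul hC, ofReal_toReal hW,
    ofReal_norm]
  refine le_mul_wass2 ofReal_ne_top hprod₁ hprod₂ fun π hπ₁ hπ₂ => ?_
  obtain ⟨X, Y, rfl, rfl, hXY⟩ := hcoupling π hπ₁ hπ₂
  rw [← hXY, ← ofReal_norm, ← ofReal_norm, ← ENNReal.ofReal_mul hC]
  exact ENNReal.ofReal_le_ofReal (hlip X Y)

theorem stmt14_general {Ω H U : Type*}
    [MeasurableSpace Ω]
    (P : Measure Ω) [IsProbabilityMeasure P]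
    [NormedAddCommGroup H] [InnerProductSpace ℝ H] [CompleteSpace H]
    [SecondCountableTopology H] [MeasurableSpace H] [BorelSpace H]
    [NormedAddCommGroup U] [InnerProductSpace ℝ U]
    (f : Measure H → U) (fhat : Lp H 2 P → U)
    -- `f̂` is the lift of `f`
    (hlift : ∀ X : Lp H 2 P, fhat X = f (P.map ⇑X))
    -- every square-integrable law is realized by some random variable on `(Ω,F,ℙ)`
    (hrealize : ∀ μ : Measure H, IsProbabilityMeasure μ →
      (∫⁻ y, (‖y‖₊ : ℝ≥0∞) ^ 2 ∂μ) ≠ ∞ → ∃ X : Lp H 2 P, P.map ⇑X = μ)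
    (Df : Lp H 2 P → (Lp H 2 P →L[ℝ] U))
    (hderiv : ∀ X : Lp H 2 P, HasFDerivAt fhat (Df X) X)
    (C : ℝ) (hC : 0 ≤ C)
    (hbound : ∀ X : Lp H 2 P, opSemiVar P 2 (Df X) ≤ ENNReal.ofReal C) :
    ∀ μ ν : Measure H, IsProbabilityMeasure μ → IsProbabilityMeasure ν →
      (∫⁻ y, (‖y‖₊ : ℝ≥0∞) ^ 2 ∂μ) ≠ ∞ → (∫⁻ y, (‖y‖₊ : ℝ≥0∞) ^ 2 ∂ν) ≠ ∞ →
      ‖f μ - f ν‖ ≤ C * (wass2 μ ν).toReal := by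
  intro μ ν _ _ hμ hν
  have hDf : ∀ X, ‖Df X‖ ≤ C := fun X => by
    rw [← ENNReal.ofReal_le_ofReal_iff hC]
    exact (ofReal_norm (Df X)).trans_le ((enorm_le_opSemiVar ofNat_ne_top (Df X)).trans (hbound X))
  have hlip : ∀ X Y : Lp H 2 P, ‖fhat X - fhat Y‖ ≤ C * ‖X - Y‖ := fun X Y =>
    convex_univ.norm_image_sub_le_of_norm_hasFDerivWithin_le
      (fun Z _ => (hderiv Z).hasFDerivWithinAt) (fun Z _ => hDf Z) (Set.mem_univ Y)
      (Set.mem_univ X)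
  refine norm_sub_le_mul_wass2_of_lipschitz_lift f hrealize hC (fun X Y => ?_) hμ hν
  simpa only [hlift] using hlip X Y

/-- If `f : P₂(H) → U` is absolutely continuously L-differentiable with
`⦀Df̂(X)⦀_{2,ℙ} ≤ C` for all `X`, then `f` is `C`-Lipschitz for the `2`-Wasserstein
metric. -/
theorem stmt14 {Ω H U : Type*}
    [MeasurableSpace Ω] [TopologicalSpace Ω] [PolishSpace Ω] [BorelSpace Ω]
    (P : Measure Ω) [IsProbabilityMeasure P]
    [NormedAddCommGroup H] [InnerProductSpace ℝ H] [CompleteSpace H]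
    [SecondCountableTopology H] [MeasurableSpace H] [BorelSpace H]
    [NormedAddCommGroup U] [InnerProductSpace ℝ U] [CompleteSpace U]
    (f : Measure H → U) (fhat : Lp H 2 P → U)
    -- `f̂` is the lift of `f`
    (hlift : ∀ X : Lp H 2 P, fhat X = f (P.map ⇑X))
    -- every square-integrable law is realized by some random variable on `(Ω,F,ℙ)`
    (hrealize : ∀ μ : Measure H, IsProbabilityMeasure μ →
      (∫⁻ y, (‖y‖₊ : ℝ≥0∞) ^ 2 ∂μ) ≠ ∞ → ∃ X : Lp H 2 P, P.map ⇑X = μ)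
    (Df : Lp H 2 P → (Lp H 2 P →L[ℝ] U))
    (hderiv : ∀ X : Lp H 2 P, HasFDerivAt fhat (Df X) X)
    (hΛcont : ∀ (X : Lp H 2 P) (ε : ℝ≥0∞), 0 < ε → ∃ δ > (0 : ℝ), ∀ X' : Lp H 2 P,
      ‖X' - X‖ < δ → opSemiVar P 2 (Df X' - Df X) < ε)
    (C : ℝ) (hC : 0 ≤ C)
    (hbound : ∀ X : Lp H 2 P, opSemiVar P 2 (Df X) ≤ ENNReal.ofReal C) :
    ∀ μ ν : Measure H, IsProbabilityMeasure μ → IsProbabilityMeasure ν →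
      (∫⁻ y, (‖y‖₊ : ℝ≥0∞) ^ 2 ∂μ) ≠ ∞ → (∫⁻ y, (‖y‖₊ : ℝ≥0∞) ^ 2 ∂ν) ≠ ∞ →
      ‖f μ - f ν‖ ≤ C * (wass2 μ ν).toReal :=
  stmt14_general P f fhat hlift hrealize Df hderiv C hC hbound
end
end

section
/- Let f : P_2(H) → U be absolutely continuously L-differentiable with lift f̂ and regular L-derivative ∂_μ f. Then for every μ_0 ∈ P_2(H), every X_0 ∈ L^2(Ω,H) with law μ_0, every u ∈ H and v ∈ U: ⟨∂_μ f(μ_0)(y)u, v⟩_U = ⟨u, E[Df̂(X_0)*v | X_0 = y]⟩_H for μ_0-almost every y, where Df̂(X_0)* : U → L^2(Ω,H) is the adjoint of the Fréchet derivative. -/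
open MeasureTheory ENNReal Filter RealInnerProductSpace

noncomputable section

theorem integral_apply_indicatorConstLp {Ω E F : Type*} [MeasurableSpace Ω] {P : Measure Ω}
    [NormedAddCommGroup E] [NormedSpace ℝ E] [NormedAddCommGroup F] [NormedSpace ℝ F]
    {p : ℝ≥0∞} (g : Ω → E →L[ℝ] F) {A : Set Ω} (hA : MeasurableSet A) (hPA : P A ≠ ∞)
    (u : E) :
    ∫ ω, g ω (indicatorConstLp p hA hPA u ω) ∂P = ∫ ω in A, g ω u ∂P := by
  rw [← integral_indicator hA]
  refine integral_congr_ae ?_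
  filter_upwards [indicatorConstLp_coeFn (p := p) (hs := hA) (hμs := hPA) (c := u)] with ω hω
  by_cases h : ω ∈ A <;> simp [hω, h]

section Adjoint

variable {Ω E F : Type*} [MeasurableSpace Ω] {P : Measure Ω}
  [NormedAddCommGroup E] [InnerProductSpace ℝ E] [CompleteSpace E]
  [NormedAddCommGroup F] [InnerProductSpace ℝ F] [CompleteSpace F]

theorem setIntegral_inner_adjoint_apply (L : Lp E 2 P →L[ℝ] F) {A : Set Ω}
    (hA : MeasurableSet A) (hPA : P A ≠ ∞) (u : E) (v : F) :
    ∫ ω in A, ⟪u, (ContinuousLinearMap.adjoint L v : Lp E 2 P) ω⟫ ∂P =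
      ⟪L (indicatorConstLp 2 hA hPA u), v⟫ := by
  rw [← L2.inner_indicatorConstLp_eq_setIntegral_inner ℝ _ hA u hPA,
    ContinuousLinearMap.adjoint_inner_right]

theorem setIntegral_inner_adjoint_eq_setIntegral_inner [IsFiniteMeasure P]
    {L : Lp E 2 P →L[ℝ] F} {g : Ω → E →L[ℝ] F} (hL : ∀ Y : Lp E 2 P, L Y = ∫ ω, g ω (Y ω) ∂P)
    (u : E) (hgu : Integrable (fun ω => g ω u) P) (v : F) {A : Set Ω} (hA : MeasurableSet A) :
    ∫ ω in A, ⟪u, (ContinuousLinearMap.adjoint L v : Lp E 2 P) ω⟫ ∂P =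
      ∫ ω in A, ⟪g ω u, v⟫ ∂P := by
  rw [setIntegral_inner_adjoint_apply L hA (measure_ne_top P A), hL,
    integral_apply_indicatorConstLp, real_inner_comm, ← integral_inner hgu.integrableOn]
  simp_rw [real_inner_comm v]

end Adjoint

theorem stmt16_general {Ω H U : Type*}
    [MeasurableSpace Ω]
    (P : Measure Ω) [IsProbabilityMeasure P]
    [NormedAddCommGroup H] [InnerProductSpace ℝ H] [CompleteSpace H]
    [MeasurableSpace H]
    [NormedAddCommGroup U] [InnerProductSpace ℝ U] [CompleteSpace U]
    (Df : Lp H 2 P → (Lp H 2 P →L[ℝ] U))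
    (μ0 : Measure H)
    (pmuf : H → (H →L[ℝ] U)) (hpmuf : MemLp pmuf 2 μ0)
    (hrep : ∀ X : Lp H 2 P, P.map ⇑X = μ0 →
      ∀ Y : Lp H 2 P, Df X Y = ∫ ω, pmuf (X ω) (Y ω) ∂P)
    (X0 : Ω → H) (hX0meas : Measurable X0) (hX0 : MemLp X0 2 P)
    (hX0law : P.map X0 = μ0) (u : H) (v : U) :
    ∀ B : Set H, MeasurableSet B →
      ∫ ω in X0 ⁻¹' B,
          (⟪u, ((ContinuousLinearMap.adjoint (Df (MemLp.toLp X0 hX0))) v : Lp H 2 P) ω⟫ : ℝ) ∂P =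
        ∫ ω in X0 ⁻¹' B, (⟪pmuf (X0 ω) u, v⟫ : ℝ) ∂P := by
  intro B hB
  have hX : ⇑(hX0.toLp X0) =ᵐ[P] X0 := hX0.coeFn_toLp
  have hrepX0 : ∀ Y : Lp H 2 P, Df (hX0.toLp X0) Y = ∫ ω, pmuf (X0 ω) (Y ω) ∂P := fun Y => by
    rw [hrep _ (by rw [Measure.map_congr hX, hX0law]) Y]
    exact integral_congr_ae (hX.mono fun ω hω => congrArg (fun x => pmuf x (Y ω)) hω)
  have hpmuf_int : Integrable (fun ω => pmuf (X0 ω) u) P :=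
    (((hX0law ▸ hpmuf).comp_of_map hX0meas.aemeasurable).integrable one_le_two
      ).apply_continuousLinearMap u
  exact setIntegral_inner_adjoint_eq_setIntegral_inner hrepX0 u hpmuf_int v (hX0meas hB)

/-- For an absolutely continuously L-differentiable `f : P₂(H) → U` with regular
L-derivative `∂_μ f(μ₀) = pmuf` and any `X₀` with law `μ₀`:
`⟨∂_μ f(μ₀)(y) u, v⟩ = ⟨u, E[Df̂(X₀)* v | X₀ = y]⟩` for `μ₀`-a.e. `y`, expressed in the
integrated form defining the conditional expectation: for all `B ∈ B(H)`,
`∫_{X₀⁻¹ B} ⟨u, (Df̂(X₀)* v)(ω)⟩ dℙ = ∫_{X₀⁻¹ B} ⟨∂_μ f(μ₀)(X₀(ω)) u, v⟩ dℙ`. -/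
theorem stmt16 {Ω H U : Type*}
    [MeasurableSpace Ω] [TopologicalSpace Ω] [PolishSpace Ω] [BorelSpace Ω]
    (P : Measure Ω) [IsProbabilityMeasure P]
    (hatomless : ∀ A : Set Ω, MeasurableSet A → 0 < P A →
      ∃ B : Set Ω, MeasurableSet B ∧ B ⊆ A ∧ 0 < P B ∧ P B < P A)
    [NormedAddCommGroup H] [InnerProductSpace ℝ H] [CompleteSpace H]
    [SecondCountableTopology H] [MeasurableSpace H] [BorelSpace H]
    [NormedAddCommGroup U] [InnerProductSpace ℝ U] [CompleteSpace U]
    (fhat : Lp H 2 P → U)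
    (hlaw : ∀ X X' : Lp H 2 P, P.map ⇑X = P.map ⇑X' → fhat X = fhat X')
    (Df : Lp H 2 P → (Lp H 2 P →L[ℝ] U))
    (hderiv : ∀ X : Lp H 2 P, HasFDerivAt fhat (Df X) X)
    (hΛfin : ∀ X : Lp H 2 P, opSemiVar P 2 (Df X) < ∞)
    (hΛcont : ∀ (X : Lp H 2 P) (ε : ℝ≥0∞), 0 < ε → ∃ δ > (0 : ℝ), ∀ X' : Lp H 2 P,
      ‖X' - X‖ < δ → opSemiVar P 2 (Df X' - Df X) < ε)
    (μ0 : Measure H) [IsProbabilityMeasure μ0]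
    (pmuf : H → (H →L[ℝ] U)) (hpmuf : MemLp pmuf 2 μ0)
    (hrep : ∀ X : Lp H 2 P, P.map ⇑X = μ0 →
      ∀ Y : Lp H 2 P, Df X Y = ∫ ω, pmuf (X ω) (Y ω) ∂P)
    (X0 : Ω → H) (hX0meas : Measurable X0) (hX0 : MemLp X0 2 P)
    (hX0law : P.map X0 = μ0) (u : H) (v : U) :
    ∀ B : Set H, MeasurableSet B →
      ∫ ω in X0 ⁻¹' B,
          (⟪u, ((ContinuousLinearMap.adjoint (Df (MemLp.toLp X0 hX0))) v : Lp H 2 P) ω⟫ : ℝ) ∂P =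
        ∫ ω in X0 ⁻¹' B, (⟪pmuf (X0 ω) u, v⟫ : ℝ) ∂P :=
  stmt16_general P Df μ0 pmuf hpmuf hrep X0 hX0meas hX0 hX0law u v
end
end
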